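/- arXiv:1906.00132 — 9 statements merged into one kernel-verified Lean document; each statement's English description precedes it below -/
import Mathlib

section
/- Let p ≥ 6, q ≥ 5 and n ≥ 1 be natural numbers. If there exists a (p-1, q; 4)-coloring of Fin n, then there exists a (p, q; 4)-coloring of Fin (2*n). (This is the transfer form of the recurrence r_4(p,q) ≥ 2·(r_4(p-1,q) − 1) + 1.) -/
/-- An `(a, b; k)`-coloring of `Fin n`: a 2-coloring of the `k`-subsets
(`true` = red, `false` = blue) such that every `a`-subset contains a blue
`k`-subset and every `b`-subset contains a red `k`-subset. -/
def IsColoring (a b k n : ℕ) (χ : Finset (Fin n) → Bool) : Prop :=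
  (∀ S : Finset (Fin n), S.card = a → ∃ e ⊆ S, e.card = k ∧ χ e = false) ∧
  (∀ S : Finset (Fin n), S.card = b → ∃ e ⊆ S, e.card = k ∧ χ e = true)

namespace Stmt0Aux

/-- Projection `Fin (2*n) → Fin n` by reduction mod `n`. -/
def pr (n : ℕ) (hn : 0 < n) (x : Fin (2 * n)) : Fin n :=
  ⟨x.val % n, Nat.mod_lt _ hn⟩

lemma pr_eq_iff {n : ℕ} (hn : 0 < n) {x y : Fin (2 * n)} :
    pr n hn x = pr n hn y ↔ x.val % n = y.val % n := by
  simp [pr, Fin.ext_iff]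

/-- Each fiber of `pr` contains at most 2 points. -/
lemma split {n : ℕ} (hn : 0 < n) (a : Fin (2 * n)) :
    a.val = a.val % n ∨ a.val = a.val % n + n := by
  have h := Nat.div_add_mod a.val n
  have h2 : a.val / n ≤ 1 := by
    have h3 : a.val / n < 2 := Nat.div_lt_of_lt_mul (by have := a.isLt; omega)
    omega
  rcases Nat.le_one_iff_eq_zero_or_eq_one.mp h2 with h0 | h0 <;>
    rw [h0] at h <;> omega

lemma fiber {n : ℕ} (hn : 0 < n) {a b c : Fin (2 * n)}
    (hab : pr n hn a = pr n hn b) (hac : pr n hn a = pr n hn c)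
    (h1 : a ≠ b) (h2 : a ≠ c) : b = c := by
  rw [pr_eq_iff hn] at hab hac
  have ha := split hn a
  have hb := split hn b
  have hc := split hn c
  have h1' : a.val ≠ b.val := fun h => h1 (Fin.ext h)
  have h2' : a.val ≠ c.val := fun h => h2 (Fin.ext h)
  exact Fin.ext (by omega)

lemma fiber_card_le {n : ℕ} (hn : 0 < n) (T : Finset (Fin (2 * n))) :
    T.card ≤ 2 * (T.image (pr n hn)).card := by
  apply Finset.card_le_mul_card_image
  intro b _
  by_contra hlt
  push_neg at hlt
  obtain ⟨t, ht, htc⟩ := Finset.exists_subset_card_eq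
      (s := T.filter (fun a => pr n hn a = b)) (n := 3) (by omega)
  obtain ⟨x, y, z, hxy, hxz, hyz, rfl⟩ := Finset.card_eq_three.mp htc
  have hx := Finset.mem_filter.mp (ht (show x ∈ ({x, y, z} : Finset _) by simp))
  have hy := Finset.mem_filter.mp (ht (show y ∈ ({x, y, z} : Finset _) by simp))
  have hz := Finset.mem_filter.mp (ht (show z ∈ ({x, y, z} : Finset _) by simp))
  exact hyz (fiber hn (hx.2.trans hy.2.symm) (hx.2.trans hz.2.symm) hxy hxz)

/-- Lifting a subset of the image back through an injective projection. -/
lemma lift {n : ℕ} (hn : 0 < n) (S : Finset (Fin (2 * n)))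
    (hinj : Set.InjOn (pr n hn) S) {e : Finset (Fin n)}
    (he : e ⊆ S.image (pr n hn)) :
    ∃ f, f ⊆ S ∧ f.image (pr n hn) = e ∧ f.card = e.card := by
  set f := S.filter (fun a => pr n hn a ∈ e) with hf
  have hsub : f ⊆ S := Finset.filter_subset _ _
  have himg : f.image (pr n hn) = e := by
    apply Finset.Subset.antisymm
    · intro y hy
      simp only [hf, Finset.mem_image, Finset.mem_filter] at hy
      obtain ⟨a, ⟨_, h2⟩, rfl⟩ := hy
      exact h2
    · intro y hy
      obtain ⟨a, ha, rfl⟩ := Finset.mem_image.mp (he hy)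
      exact Finset.mem_image.mpr ⟨a, Finset.mem_filter.mpr ⟨ha, hy⟩, rfl⟩
  refine ⟨f, hsub, himg, ?_⟩
  rw [← himg]
  exact (Finset.card_image_of_injOn (hinj.mono (Finset.coe_subset.mpr hsub))).symm

/-- The doubled coloring. -/
def double {n : ℕ} (hn : 0 < n) (χ : Finset (Fin n) → Bool)
    (e : Finset (Fin (2 * n))) : Bool :=
  if (e.image (pr n hn)).card = 4 then χ (e.image (pr n hn))
  else if (e.image (pr n hn)).card = 3 then true else false

/-- Pipeline: injective part of size `k` yields a monochromatic lifted 4-set. -/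
lemma lifted {n k : ℕ} (hn : 0 < n) (S' : Finset (Fin (2 * n)))
    (χ : Finset (Fin n) → Bool) (b : Bool)
    (hinj : Set.InjOn (pr n hn) S')
    (H : ∀ T : Finset (Fin n), T.card = k → ∃ e ⊆ T, e.card = 4 ∧ χ e = b)
    (hcard : S'.card = k) :
    ∃ f ⊆ S', f.card = 4 ∧ double hn χ f = b := by
  have him : (S'.image (pr n hn)).card = k := by
    rw [Finset.card_image_of_injOn hinj, hcard]
  obtain ⟨e, hesub, hecard, hecol⟩ := H _ him
  obtain ⟨f, hfsub, hfimg, hfcard⟩ := lift hn S' hinj hesub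
  exact ⟨f, hfsub, by rw [hfcard, hecard],
    by simp [double, hfimg, hecard, hecol]⟩

end Stmt0Aux

open Stmt0Aux in
theorem stmt_0 (p q n : ℕ) (hp : 6 ≤ p) (hq : 5 ≤ q) (hn : 1 ≤ n)
    (h : ∃ χ : Finset (Fin n) → Bool, IsColoring (p - 1) q 4 n χ) :
    ∃ χ' : Finset (Fin (2 * n)) → Bool, IsColoring p q 4 (2 * n) χ' := by
  obtain ⟨χ, hblue, hred⟩ := h
  have hn' : 0 < n := hn
  refine ⟨double hn' χ, ?_, ?_⟩
  · -- every `p`-set contains a blue 4-set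
    intro S hS
    by_cases htw : ∃ x ∈ S, ∃ x' ∈ S, x ≠ x' ∧ pr n hn' x = pr n hn' x'
    · obtain ⟨x, hx, x', hx', hxx, hpxx⟩ := htw
      by_cases htw2 : ∃ y ∈ S, ∃ y' ∈ S, y ≠ y' ∧ y ≠ x ∧ y ≠ x' ∧ y' ≠ x ∧
          y' ≠ x' ∧ pr n hn' y = pr n hn' y'
      · -- two disjoint twin pairs: image has 2 elements, blue
        obtain ⟨y, hy, y', hy', hyy, hyx, hyx', hy'x, hy'x', hpyy⟩ := htw2
        have hpxy : pr n hn' x ≠ pr n hn' y := fun hh =>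
          hyx' ((fiber hn' hpxx hh hxx (Ne.symm hyx))).symm
        refine ⟨{x, x', y, y'}, ?_, ?_, ?_⟩
        · intro a ha
          simp only [Finset.mem_insert, Finset.mem_singleton] at ha
          rcases ha with rfl | rfl | rfl | rfl <;> assumption
        · rw [Finset.card_insert_of_notMem (by simp [hxx, hyx.symm, hy'x.symm]),
            Finset.card_insert_of_notMem (by simp [hyx'.symm, hy'x'.symm]),
            Finset.card_insert_of_notMem (by simp [hyy]), Finset.card_singleton]
        · have himg : ({x, x', y, y'} : Finset _).image (pr n hn') =
              {pr n hn' x, pr n hn' y} := by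
            ext u
            simp only [Finset.image_insert, Finset.image_singleton,
              Finset.mem_insert, Finset.mem_singleton, ← hpxx, ← hpyy]
            tauto
          have h2 : ({pr n hn' x, pr n hn' y} : Finset _).card = 2 := by
            rw [Finset.card_insert_of_notMem (by simp [hpxy]),
              Finset.card_singleton]
          simp [double, himg, h2]
      · -- exactly one twin pair: erase `x'` and lift
        push_neg at htw2
        have hinj : Set.InjOn (pr n hn') (S.erase x') := by
          intro a ha b hb hpab
          by_contra hne
          have ha' := Finset.mem_erase.mp (Finset.mem_coe.mp ha)
          have hb' := Finset.mem_erase.mp (Finset.mem_coe.mp hb)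
          by_cases hax : a = x
          · subst hax
            exact hb'.1 (fiber hn' hpxx hpab hxx hne).symm
          · by_cases hbx : b = x
            · subst hbx
              exact ha'.1 (fiber hn' hpxx hpab.symm hxx (Ne.symm hne)).symm
            · exact htw2 a ha'.2 b hb'.2 hne hax ha'.1 hbx hb'.1 hpab
        have hScard : (S.erase x').card = p - 1 := by
          rw [Finset.card_erase_of_mem hx', hS]
        obtain ⟨f, hfsub, hfcard, hfcol⟩ := lifted hn' _ χ false hinj hblue hScard
        exact ⟨f, hfsub.trans (Finset.erase_subset _ _), hfcard, hfcol⟩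
    · -- no twin pair: injective, use a `(p-1)`-subset
      push_neg at htw
      obtain ⟨S', hS'sub, hS'card⟩ :=
        Finset.exists_subset_card_eq (show p - 1 ≤ S.card by omega)
      have hinj : Set.InjOn (pr n hn') S' := by
        intro a ha b hb hpab
        by_contra hne
        exact htw a (hS'sub (Finset.mem_coe.mp ha)) b
          (hS'sub (Finset.mem_coe.mp hb)) hne hpab
      obtain ⟨f, hfsub, hfcard, hfcol⟩ := lifted hn' _ χ false hinj hblue hS'card
      exact ⟨f, hfsub.trans hS'sub, hfcard, hfcol⟩
  · -- every `q`-set contains a red 4-set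
    intro S hS
    by_cases htw : ∃ x ∈ S, ∃ x' ∈ S, x ≠ x' ∧ pr n hn' x = pr n hn' x'
    · obtain ⟨x, hx, x', hx', hxx, hpxx⟩ := htw
      set T := (S.erase x).erase x' with hT
      have hx'T : x' ∈ S.erase x := Finset.mem_erase.mpr ⟨Ne.symm hxx, hx'⟩
      have hTcard : T.card = q - 2 := by
        rw [hT, Finset.card_erase_of_mem hx'T, Finset.card_erase_of_mem hx, hS]
        omega
      have hT2 : 1 < (T.image (pr n hn')).card := by
        have := fiber_card_le hn' T
        omega
      obtain ⟨u, hu, v, hv, huv⟩ := Finset.one_lt_card.mp hT2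
      obtain ⟨y, hyT, rfl⟩ := Finset.mem_image.mp hu
      obtain ⟨z, hzT, rfl⟩ := Finset.mem_image.mp hv
      have hyz : y ≠ z := fun hh => huv (by rw [hh])
      have hyx' : y ≠ x' := (Finset.mem_erase.mp hyT).1
      have hyx : y ≠ x := (Finset.mem_erase.mp (Finset.mem_erase.mp hyT).2).1
      have hyS : y ∈ S := (Finset.mem_erase.mp (Finset.mem_erase.mp hyT).2).2
      have hzx' : z ≠ x' := (Finset.mem_erase.mp hzT).1
      have hzx : z ≠ x := (Finset.mem_erase.mp (Finset.mem_erase.mp hzT).2).1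
      have hzS : z ∈ S := (Finset.mem_erase.mp (Finset.mem_erase.mp hzT).2).2
      have hpxy : pr n hn' x ≠ pr n hn' y := fun hh =>
        hyx' ((fiber hn' hpxx hh hxx (Ne.symm hyx))).symm
      have hpxz : pr n hn' x ≠ pr n hn' z := fun hh =>
        hzx' ((fiber hn' hpxx hh hxx (Ne.symm hzx))).symm
      refine ⟨{x, x', y, z}, ?_, ?_, ?_⟩
      · intro a ha
        simp only [Finset.mem_insert, Finset.mem_singleton] at ha
        rcases ha with rfl | rfl | rfl | rfl <;> assumption
      · rw [Finset.card_insert_of_notMem (by simp [hxx, hyx.symm, hzx.symm]),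
          Finset.card_insert_of_notMem (by simp [hyx'.symm, hzx'.symm]),
          Finset.card_insert_of_notMem (by simp [hyz]), Finset.card_singleton]
      · have himg : ({x, x', y, z} : Finset _).image (pr n hn') =
            {pr n hn' x, pr n hn' y, pr n hn' z} := by
          ext u
          simp only [Finset.image_insert, Finset.image_singleton,
            Finset.mem_insert, Finset.mem_singleton, ← hpxx]
          tauto
        have h3 : ({pr n hn' x, pr n hn' y, pr n hn' z} : Finset _).card = 3 := by
          rw [Finset.card_insert_of_notMem (by simp [hpxy, hpxz]),
            Finset.card_insert_of_notMem (by simp [huv]),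
            Finset.card_singleton]
        simp [double, himg, h3]
    · push_neg at htw
      have hinj : Set.InjOn (pr n hn') S := by
        intro a ha b hb hpab
        by_contra hne
        exact htw a (Finset.mem_coe.mp ha) b (Finset.mem_coe.mp hb) hne hpab
      exact lifted hn' _ χ true hinj hred hS
end

section
/- Let p ≥ 6, q ≥ 7 and n ≥ 1 be natural numbers. If there exists a (p-1, q; 4)-coloring of Fin n, then there exists a (p, q; 4)-coloring of Fin ((p-1)*n). (This is the transfer form of the recurrence r_4(p,q) ≥ (p−1)·(r_4(p-1,q) − 1) + 1.) -/
/-!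
Blow each vertex of a `(p - 1, q; 4)`-coloring up into a block of `p - 1` vertices and colour a
4-set by the blocks it meets: if it meets four blocks it takes the colour of its image, if it meets
exactly two it is blue, otherwise red.

A `p`-set meeting at least `p - 1` blocks contains the lift of a blue 4-set of the original
coloring. Otherwise it meets between two and `p - 2` blocks (a block has only `p - 1` vertices),
so it contains three vertices of one block and one of another, or two vertices in each of two
blocks: a blue 4-set.

A `q`-set either has four vertices in one block, or has two in one block and meets two further
blocks (it meets at least three blocks once no block holds four of its vertices, as `q ≥ 7`), or
meets `q` blocks; in each case it contains a red 4-set.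
-/

open Finset

section Fibers

variable {α β : Type*} [DecidableEq β] {f : α → β} {s : Finset α}

lemma one_le_card_fiber_of_mem_image {y : β} (hy : y ∈ s.image f) :
    1 ≤ #{x ∈ s | f x = y} := by
  obtain ⟨x, hx, rfl⟩ := mem_image.1 hy
  exact card_pos.2 ⟨x, mem_filter.2 ⟨hx, rfl⟩⟩

lemma exists_subset_card_eq_image_eq_singleton {k : ℕ} {y : β} (hk : 0 < k)
    (h : k ≤ #{x ∈ s | f x = y}) : ∃ u ⊆ s, #u = k ∧ u.image f = {y} := by
  obtain ⟨u, hu, rfl⟩ := exists_subset_card_eq h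
  refine ⟨u, hu.trans (filter_subset _ _), rfl, ?_⟩
  refine ((card_pos.1 hk).image f).subset_singleton_iff.1 (image_subset_iff.2 fun x hx => ?_)
  exact mem_singleton.2 (mem_filter.1 (hu hx)).2

lemma exists_subset_card_eq_sum_image_eq [DecidableEq α] (Y : Finset β) (k : β → ℕ)
    (hk : ∀ y ∈ Y, 0 < k y ∧ k y ≤ #{x ∈ s | f x = y}) :
    ∃ t ⊆ s, #t = ∑ y ∈ Y, k y ∧ t.image f = Y := by
  induction Y using Finset.induction with
  | empty => exact ⟨∅, empty_subset _, by simp, by simp⟩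
  | @insert y Y hy ih =>
    obtain ⟨t, hts, ht, htY⟩ := ih fun z hz => hk z (mem_insert_of_mem hz)
    obtain ⟨u, hus, hu, huy⟩ :=
      exists_subset_card_eq_image_eq_singleton (hk y (mem_insert_self y Y)).1
        (hk y (mem_insert_self y Y)).2
    have hdisj : Disjoint u t :=
      Disjoint.of_image_finset (f := f) (by rw [huy, htY]; exact disjoint_singleton_left.2 hy)
    refine ⟨u ∪ t, union_subset hus hts, ?_, ?_⟩
    · rw [card_union_of_disjoint hdisj, sum_insert hy, hu, ht]
    · rw [image_union, huy, htY, insert_eq]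

lemma exists_subset_card_eq_image_eq [DecidableEq α] {A : Finset β} (hA : A ⊆ s.image f) :
    ∃ t ⊆ s, #t = #A ∧ t.image f = A := by
  simpa using exists_subset_card_eq_sum_image_eq A (fun _ => 1)
    fun y hy => ⟨one_pos, one_le_card_fiber_of_mem_image (hA hy)⟩

lemma exists_card_eq_succ_card_image_eq_one {k : ℕ} (h : #(s.image f) * k < #s) :
    ∃ t ⊆ s, #t = k + 1 ∧ #(t.image f) = 1 := by
  obtain ⟨y, -, hy⟩ :=
    exists_lt_card_fiber_of_mul_lt_card_of_maps_to (fun x hx => mem_image_of_mem f hx) h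
  obtain ⟨t, hts, ht, hty⟩ := exists_subset_card_eq_image_eq_singleton k.succ_pos hy
  exact ⟨t, hts, ht, by rw [hty, card_singleton]⟩

lemma exists_card_eq_add_card_image_eq_two [DecidableEq α] {y y' : β} (hne : y ≠ y')
    {k l : ℕ} (hk : 0 < k) (hl : 0 < l) (hy : k ≤ #{x ∈ s | f x = y})
    (hy' : l ≤ #{x ∈ s | f x = y'}) : ∃ t ⊆ s, #t = k + l ∧ #(t.image f) = 2 := by
  obtain ⟨t, hts, ht, hty⟩ := exists_subset_card_eq_sum_image_eq (s := s) (f := f) {y, y'}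
    (fun z => if z = y then k else l) (by simp [hne.symm, hk, hl, hy, hy'])
  refine ⟨t, hts, ?_, by rw [hty, card_pair hne]⟩
  rw [ht, sum_pair hne, if_pos rfl, if_neg hne.symm]

lemma card_le_card_image_add_card_filter (h : ∀ y, #{x ∈ s | f x = y} ≤ 2) :
    #s ≤ #(s.image f) + #{y ∈ s.image f | 2 ≤ #{x ∈ s | f x = y}} := by
  calc #s = ∑ y ∈ s.image f, #{x ∈ s | f x = y} := card_eq_sum_card_image f s
    _ ≤ ∑ y ∈ s.image f, (1 + if 2 ≤ #{x ∈ s | f x = y} then 1 else 0) :=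
        sum_le_sum fun y _ => by have := h y; split_ifs <;> omega
    _ = _ := by rw [sum_add_distrib, sum_boole, card_eq_sum_ones (s.image f)]; simp

lemma exists_card_eq_four_card_image_eq_two [DecidableEq α] (h2 : 2 ≤ #(s.image f))
    (hs : #(s.image f) + 2 ≤ #s) : ∃ t ⊆ s, #t = 4 ∧ #(t.image f) = 2 := by
  by_cases htriple : ∃ y, 3 ≤ #{x ∈ s | f x = y}
  · obtain ⟨y, hy⟩ := htriple
    obtain ⟨y', hy', hne⟩ := exists_mem_ne (by omega : 1 < #(s.image f)) y
    exact exists_card_eq_add_card_image_eq_two hne.symm (k := 3) (by norm_num) one_pos hy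
      (one_le_card_fiber_of_mem_image hy')
  · push Not at htriple
    have hpairs := card_le_card_image_add_card_filter fun y => Nat.le_of_lt_succ (htriple y)
    obtain ⟨y, hy, y', hy', hne⟩ :=
      one_lt_card.1 (by omega : 1 < #{y ∈ s.image f | 2 ≤ #{x ∈ s | f x = y}})
    exact exists_card_eq_add_card_image_eq_two hne (k := 2) (l := 2) (by norm_num) (by norm_num)
      (mem_filter.1 hy).2 (mem_filter.1 hy').2

lemma exists_card_eq_four_card_image_eq_three [DecidableEq α] (h3 : 3 ≤ #(s.image f))
    (hs : #(s.image f) < #s) : ∃ t ⊆ s, #t = 4 ∧ #(t.image f) = 3 := by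
  obtain ⟨y, hy, hpair⟩ := exists_lt_card_fiber_of_mul_lt_card_of_maps_to
    (fun x hx => mem_image_of_mem f hx) (by rwa [mul_one] : #(s.image f) * 1 < #s)
  obtain ⟨y₁, hy₁, y₂, hy₂, hne⟩ := one_lt_card.1
    (by rw [card_erase_of_mem hy]; omega : 1 < #((s.image f).erase y))
  obtain ⟨hy₁y, hy₁⟩ := mem_erase.1 hy₁
  obtain ⟨hy₂y, hy₂⟩ := mem_erase.1 hy₂
  obtain ⟨t, hts, ht, hty⟩ := exists_subset_card_eq_sum_image_eq (s := s) (f := f) {y, y₁, y₂}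
    (fun z => if z = y then 2 else 1)
    (by simp [hy₁y, hy₂y, Nat.succ_le_of_lt hpair, one_le_card_fiber_of_mem_image hy₁,
      one_le_card_fiber_of_mem_image hy₂])
  have hy_notMem : y ∉ ({y₁, y₂} : Finset β) := by simp [hy₁y.symm, hy₂y.symm]
  refine ⟨t, hts, ?_, ?_⟩
  · rw [ht, sum_insert hy_notMem, sum_pair hne]
    simp [hy₁y, hy₂y]
  · rw [hty, card_insert_of_notMem hy_notMem, card_pair hne]

end Fibers

lemma card_filter_snd_comp_le {α ι β : Type*} [Fintype ι] [DecidableEq β] (e : α ≃ ι × β)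
    (s : Finset α) (y : β) : #{x ∈ s | (e x).2 = y} ≤ Fintype.card ι := by
  refine card_le_card_of_injOn (fun x => (e x).1) (fun _ _ => mem_coe.2 (mem_univ _)) ?_
  intro x hx x' hx' h
  simp only [mem_coe, mem_filter] at hx hx'
  exact e.injective (Prod.ext h (hx.2.trans hx'.2.symm))

section BlowUp

variable {α β : Type*} [DecidableEq β]

def blowUp (f : α → β) (χ : Finset β → Bool) (e : Finset α) : Bool :=
  if #(e.image f) = 4 then χ (e.image f) else #(e.image f) ≠ 2

variable {f : α → β} {χ : Finset β → Bool} {e : Finset α}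

lemma blowUp_of_card_image_eq_four (h : #(e.image f) = 4) : blowUp f χ e = χ (e.image f) := by
  simp [blowUp, h]

lemma blowUp_of_card_image_eq_two (h : #(e.image f) = 2) : blowUp f χ e = false := by
  simp [blowUp, h]

lemma blowUp_of_card_image_ne (h₂ : #(e.image f) ≠ 2) (h₄ : #(e.image f) ≠ 4) :
    blowUp f χ e = true := by
  simp [blowUp, h₂, h₄]

lemma exists_blowUp_eq_of_le_card_image [DecidableEq α] {s : Finset α} {a : ℕ} {c : Bool}
    (hχ : ∀ A : Finset β, #A = a → ∃ e ⊆ A, #e = 4 ∧ χ e = c) (ha : a ≤ #(s.image f)) :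
    ∃ e ⊆ s, #e = 4 ∧ blowUp f χ e = c := by
  obtain ⟨A, hAs, hA⟩ := exists_subset_card_eq ha
  obtain ⟨e', he'A, he', hχe'⟩ := hχ A hA
  obtain ⟨e, hes, he, hee'⟩ := exists_subset_card_eq_image_eq (he'A.trans hAs)
  refine ⟨e, hes, he.trans he', ?_⟩
  rw [blowUp_of_card_image_eq_four (by rw [hee', he']), hee', hχe']

end BlowUp

theorem stmt_1_general (p q n : ℕ) (hq : 7 ≤ q)
    (h : ∃ χ : Finset (Fin n) → Bool, IsColoring (p - 1) q 4 n χ) :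
    ∃ χ' : Finset (Fin ((p - 1) * n)) → Bool, IsColoring p q 4 ((p - 1) * n) χ' := by
  obtain ⟨χ, hblue, hred⟩ := h
  set π : Fin ((p - 1) * n) → Fin n := fun x => (finProdFinEquiv.symm x).2
  refine ⟨blowUp π χ, fun S hS => ?_, fun T hT => ?_⟩
  · by_cases hm : p - 1 ≤ #(S.image π)
    · exact exists_blowUp_eq_of_le_card_image hblue hm
    have hS_le : #S ≤ (p - 1) * #(S.image π) := card_le_mul_card_image S _ fun y _ =>
      (card_filter_snd_comp_le finProdFinEquiv.symm S y).trans_eq (Fintype.card_fin _)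
    have h2 : 2 ≤ #(S.image π) := by
      by_contra! h1
      have := Nat.mul_le_mul_left (p - 1) (Nat.le_of_lt_succ h1)
      omega
    obtain ⟨e, heS, he, he2⟩ := exists_card_eq_four_card_image_eq_two h2 (by omega)
    exact ⟨e, heS, he, blowUp_of_card_image_eq_two he2⟩
  · by_cases h1 : #(T.image π) * 3 < #T
    · obtain ⟨e, heT, he, he1⟩ := exists_card_eq_succ_card_image_eq_one h1
      exact ⟨e, heT, he, blowUp_of_card_image_ne (by omega) (by omega)⟩
    by_cases h3 : #(T.image π) < #T
    · obtain ⟨e, heT, he, he3⟩ := exists_card_eq_four_card_image_eq_three (by omega) h3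
      exact ⟨e, heT, he, blowUp_of_card_image_ne (by omega) (by omega)⟩
    exact exists_blowUp_eq_of_le_card_image hred (by omega)

theorem stmt_1 (p q n : ℕ) (hp : 6 ≤ p) (hq : 7 ≤ q) (hn : 1 ≤ n)
    (h : ∃ χ : Finset (Fin n) → Bool, IsColoring (p - 1) q 4 n χ) :
    ∃ χ' : Finset (Fin ((p - 1) * n)) → Bool, IsColoring p q 4 ((p - 1) * n) χ' :=
  stmt_1_general p q n hq h
end

section
/- Let k be an even natural number with k ≥ 4, and let p ≥ k+2, q ≥ k+1, n ≥ 1. If there exists a (p-1, q; k)-coloring of Fin n, then there exists a (p, q; k)-coloring of Fin (2*n). (This is the transfer form of the recurrence r_k(p,q) ≥ 2·(r_k(p-1,q) − 1) + 1 for even k ≥ 4.) -/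
/-
Blow up every vertex of `Fin n` into the two points of its fibre under `x ↦ x % n`, and call
`#e - #π(e)` (the number of twin pairs in `e`) the defect of a `k`-set `e`. A `k`-set of defect
`0` inherits the colour of its projection; any other `k`-set is red iff its defect is odd.
A `p`-set either projects onto `p - 1` points, which carry an old blue edge, or contains two twin
pairs, and then a `k`-subset of positive even defect; a `q`-set either projects injectively onto
`q` points, which carry an old red edge, or contains a twin pair, and then a `k`-subset of odd
defect.
-/

open Finset

section Projection

variable {α β : Type*} [DecidableEq β]

def MeetsColor (χ : Finset α → Bool) (k : ℕ) (c : Bool) (a : ℕ) : Prop :=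
  ∀ S : Finset α, #S = a → ∃ e ⊆ S, #e = k ∧ χ e = c

def AtMostTwoToOne (π : α → β) : Prop :=
  ∀ x y z, π x = π y → π y = π z → x = y ∨ y = z ∨ x = z

variable (π : α → β)

def defect (e : Finset α) : ℕ := #e - #(e.image π)

def liftColoring (χ : Finset β → Bool) (e : Finset α) : Bool :=
  if defect π e = 0 then χ (e.image π) else decide (Odd (defect π e))

lemma exists_subset_injOn_image_eq {S : Finset α} {T : Finset β} (hT : T ⊆ S.image π) :
    ∃ A ⊆ S, Set.InjOn π A ∧ A.image π = T := by
  have hsurj : Set.SurjOn π S T := fun v hv ↦ by simpa using hT hv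
  obtain ⟨A, hAS, hinj, himg⟩ := exists_subset_injOn_image_eq_of_surjOn _ T hsurj
  exact ⟨A, by exact_mod_cast hAS, hinj, himg⟩

variable {π}

lemma exists_liftColoring_eq (χ : Finset β → Bool) {S : Finset α} {e' : Finset β}
    (he' : e' ⊆ S.image π) : ∃ e ⊆ S, #e = #e' ∧ liftColoring π χ e = χ e' := by
  obtain ⟨e, heS, hinj, himg⟩ := exists_subset_injOn_image_eq π he'
  have hcard : #e = #e' := himg ▸ (card_image_of_injOn hinj).symm
  refine ⟨e, heS, hcard, ?_⟩
  rw [liftColoring, if_pos (by rw [defect, himg, hcard, Nat.sub_self]), himg]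

variable [DecidableEq α]

lemma AtMostTwoToOne.injOn_sdiff (hπ : AtMostTwoToOne π) {S A : Finset α}
    (himg : A.image π = S.image π) : Set.InjOn π ↑(S \ A) := by
  intro x hx y hy hxy
  simp only [coe_sdiff, Set.mem_sdiff, mem_coe] at hx hy
  obtain ⟨a, ha, hax⟩ := mem_image.1 (himg ▸ mem_image_of_mem π hx.1 : π x ∈ A.image π)
  rcases hπ a x y hax hxy with rfl | hxy | rfl
  · exact absurd ha hx.2
  · exact hxy
  · exact absurd ha hy.2

lemma AtMostTwoToOne.card_le_two_mul_card_image (hπ : AtMostTwoToOne π) (S : Finset α) :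
    #S ≤ 2 * #(S.image π) := by
  obtain ⟨A, hAS, hinj, himg⟩ := exists_subset_injOn_image_eq π (subset_refl (S.image π))
  have hA : #A = #(S.image π) := himg ▸ (card_image_of_injOn hinj).symm
  have hB : #(S \ A) ≤ #(S.image π) := by
    rw [← card_image_of_injOn (hπ.injOn_sdiff himg)]
    exact card_le_card (image_subset_image sdiff_subset)
  have := card_sdiff_add_card_eq_card hAS
  omega

lemma defect_union {A B : Finset α} (hAB : Disjoint A B) (hinj : Set.InjOn π A)
    (himg : B.image π ⊆ A.image π) : defect π (A ∪ B) = #B := by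
  rw [defect, image_union, union_eq_left.2 himg, card_image_of_injOn hinj,
    card_union_of_disjoint hAB]
  omega

lemma AtMostTwoToOne.exists_subset_card_eq_defect_eq (hπ : AtMostTwoToOne π) {S : Finset α}
    {k t : ℕ} (htk : 2 * t ≤ k) (hk : k ≤ #(S.image π) + t) (ht : #(S.image π) + t ≤ #S) :
    ∃ e ⊆ S, #e = k ∧ defect π e = t := by
  obtain ⟨A, hAS, hAinj, hAimg⟩ := exists_subset_injOn_image_eq π (subset_refl (S.image π))
  have hBinj := hπ.injOn_sdiff hAimg
  have hAcard : #A = #(S.image π) := hAimg ▸ (card_image_of_injOn hAinj).symm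
  have hSA : t ≤ #(S \ A) := by
    have := card_sdiff_add_card_eq_card hAS
    omega
  obtain ⟨B, hB, hBcard⟩ := exists_subset_card_eq hSA
  have hBimg : B.image π ⊆ A.image π :=
    hAimg ▸ image_subset_image (hB.trans sdiff_subset)
  obtain ⟨A₁, hA₁, hA₁inj, hA₁img⟩ := exists_subset_injOn_image_eq π hBimg
  have hA₁card : #A₁ = t := by
    rw [← card_image_of_injOn hA₁inj, hA₁img, card_image_of_injOn (hBinj.mono hB), hBcard]
  obtain ⟨A', hA₁A', hA'A, hA'card⟩ :=
    exists_subsuperset_card_eq hA₁ (n := k - t) (by omega) (by omega)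
  have hdisj : Disjoint A' B :=
    disjoint_of_subset_left hA'A (disjoint_of_subset_right hB disjoint_sdiff)
  refine ⟨A' ∪ B, union_subset (hA'A.trans hAS) (hB.trans sdiff_subset), ?_, ?_⟩
  · rw [card_union_of_disjoint hdisj]
    omega
  · rw [defect_union hdisj (hAinj.mono hA'A), hBcard]
    exact hA₁img ▸ image_subset_image hA₁A'

lemma AtMostTwoToOne.exists_liftColoring_eq_decide_odd (hπ : AtMostTwoToOne π)
    (χ : Finset β → Bool) {S : Finset α} {k t : ℕ} (ht : 0 < t) (htk : 2 * t ≤ k)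
    (hk : k ≤ #(S.image π) + t) (hS : #(S.image π) + t ≤ #S) :
    ∃ e ⊆ S, #e = k ∧ liftColoring π χ e = decide (Odd t) := by
  obtain ⟨e, heS, hecard, hdef⟩ := hπ.exists_subset_card_eq_defect_eq htk hk hS
  exact ⟨e, heS, hecard, by rw [liftColoring, hdef, if_neg ht.ne']⟩

theorem AtMostTwoToOne.meetsColor_liftColoring_false (hπ : AtMostTwoToOne π)
    {χ : Finset β → Bool} {k p : ℕ} (hk : 4 ≤ k) (hp : k + 2 ≤ p)
    (hχ : MeetsColor χ k false (p - 1)) : MeetsColor (liftColoring π χ) k false p := by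
  intro S hS
  by_cases hm : p - 1 ≤ #(S.image π)
  · obtain ⟨T, hT, hTcard⟩ := exists_subset_card_eq hm
    obtain ⟨e', he'T, he'card, he'⟩ := hχ T hTcard
    obtain ⟨e, heS, hecard, hee'⟩ := exists_liftColoring_eq χ (he'T.trans hT)
    exact ⟨e, heS, hecard.trans he'card, hee'.trans he'⟩
  · have h2m := hπ.card_le_two_mul_card_image S
    -- the least even `t` with `t ≥ 1` and `t ≥ k - #π(S)`
    obtain ⟨e, heS, hecard, he⟩ := hπ.exists_liftColoring_eq_decide_odd χ
      (S := S) (k := k) (t := 2 * ((k - #(S.image π) - 1) / 2 + 1))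
      (by omega) (by omega) (by omega) (by omega)
    exact ⟨e, heS, hecard,
      he.trans (decide_eq_false (Nat.not_odd_iff_even.2 (even_two_mul _)))⟩

theorem AtMostTwoToOne.meetsColor_liftColoring_true (hπ : AtMostTwoToOne π)
    {χ : Finset β → Bool} {k q : ℕ} (hk : 2 ≤ k) (hke : Even k) (hq : k + 1 ≤ q)
    (hχ : MeetsColor χ k true q) : MeetsColor (liftColoring π χ) k true q := by
  intro S hS
  by_cases hm : #(S.image π) = q
  · obtain ⟨e', he'S, he'card, he'⟩ := hχ _ hm
    obtain ⟨e, heS, hecard, hee'⟩ := exists_liftColoring_eq χ he'S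
    exact ⟨e, heS, hecard.trans he'card, hee'.trans he'⟩
  · have h2m := hπ.card_le_two_mul_card_image S
    have hmS : #(S.image π) ≤ #S := card_image_le
    have hk2 := Nat.even_iff.1 hke
    -- the least odd `t ≥ k - #π(S)`; evenness of `k` gives `2 * t ≤ k`
    obtain ⟨e, heS, hecard, he⟩ := hπ.exists_liftColoring_eq_decide_odd χ
      (S := S) (k := k) (t := 2 * ((k - #(S.image π)) / 2) + 1)
      (by omega) (by omega) (by omega) (by omega)
    exact ⟨e, heS, hecard, he.trans (decide_eq_true (odd_two_mul_add_one _))⟩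

end Projection

lemma atMostTwoToOne_modNat (n : ℕ) : AtMostTwoToOne (Fin.modNat : Fin (2 * n) → Fin n) := by
  have hinj : ∀ a b : Fin (2 * n), a.divNat = b.divNat → a.modNat = b.modNat → a = b :=
    fun a b h₁ h₂ ↦ finProdFinEquiv.symm.injective (Prod.ext h₁ h₂)
  intro x y z hxy hyz
  have : x.divNat = y.divNat ∨ y.divNat = z.divNat ∨ x.divNat = z.divNat := by
    simp only [Fin.ext_iff]
    omega
  rcases this with h | h | h
  · exact Or.inl (hinj x y h hxy)
  · exact Or.inr (Or.inl (hinj y z h hyz))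
  · exact Or.inr (Or.inr (hinj x z h (hxy.trans hyz)))

theorem stmt_4_general (k p q n : ℕ) (hk : 4 ≤ k) (hke : Even k)
    (hp : k + 2 ≤ p) (hq : k + 1 ≤ q)
    (h : ∃ χ : Finset (Fin n) → Bool, IsColoring (p - 1) q k n χ) :
    ∃ χ' : Finset (Fin (2 * n)) → Bool, IsColoring p q k (2 * n) χ' := by
  obtain ⟨χ, hblue, hred⟩ := h
  have hπ := atMostTwoToOne_modNat n
  exact ⟨liftColoring Fin.modNat χ, hπ.meetsColor_liftColoring_false hk hp hblue,
    hπ.meetsColor_liftColoring_true (by omega) hke hq hred⟩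

theorem stmt_4 (k p q n : ℕ) (hk : 4 ≤ k) (hke : Even k)
    (hp : k + 2 ≤ p) (hq : k + 1 ≤ q) (hn : 1 ≤ n)
    (h : ∃ χ : Finset (Fin n) → Bool, IsColoring (p - 1) q k n χ) :
    ∃ χ' : Finset (Fin (2 * n)) → Bool, IsColoring p q k (2 * n) χ' :=
  stmt_4_general k p q n hk hke hp hq h
end

section
/- Let k be an odd natural number with k ≥ 5, and let p ≥ k+2, q ≥ k+2, n ≥ 1. If there exists a (p-1, q; k)-coloring of Fin n, then there exists a (p, q; k)-coloring of Fin (2*n). (This is the transfer form of the recurrence r_k(p,q) ≥ 2·(r_k(p-1,q) − 1) + 1 for odd k ≥ 5.) -/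
namespace Stmt5Aux

variable {n : ℕ}

def dlo (v : Fin n) : Fin (2 * n) := ⟨v.1, by have := v.2; omega⟩
def dhi (v : Fin n) : Fin (2 * n) := ⟨v.1 + n, by have := v.2; omega⟩
def dpr (x : Fin (2 * n)) : Fin n := ⟨x.1 % n, Nat.mod_lt _ (by have := x.2; omega)⟩

lemma dpr_dlo (v : Fin n) : dpr (dlo v) = v :=
  Fin.ext (Nat.mod_eq_of_lt v.2)

lemma dpr_dhi (v : Fin n) : dpr (dhi v) = v := by
  apply Fin.ext
  simp only [dpr, dhi, Nat.add_mod_right]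
  exact Nat.mod_eq_of_lt v.2

lemma dlo_injective : Function.Injective (dlo : Fin n → Fin (2 * n)) := by
  intro a b h
  have h1 : (dlo a).1 = (dlo b).1 := congrArg Fin.val h
  exact Fin.ext h1

lemma dhi_injective : Function.Injective (dhi : Fin n → Fin (2 * n)) := by
  intro a b h
  have h1 : (dhi a).1 = (dhi b).1 := congrArg Fin.val h
  simp only [dhi] at h1
  exact Fin.ext (by omega)

lemma dlo_ne_dhi (v w : Fin n) : dlo v ≠ dhi w := by
  intro h
  have h1 : (dlo v).1 = (dhi w).1 := congrArg Fin.val h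
  simp only [dlo, dhi] at h1
  have := v.2
  omega

lemma eq_dlo_of_lt {x : Fin (2 * n)} (h : x.1 < n) : dlo (dpr x) = x :=
  Fin.ext (Nat.mod_eq_of_lt h)

lemma eq_dhi_of_ge {x : Fin (2 * n)} (h : n ≤ x.1) : dhi (dpr x) = x := by
  apply Fin.ext
  have h2 := x.2
  show x.1 % n + n = x.1
  have : x.1 % n = x.1 - n := by
    rw [Nat.mod_eq_sub_mod h]
    exact Nat.mod_eq_of_lt (by omega)
  omega

/-- vertices whose low copy is in `e` -/
def lows (e : Finset (Fin (2 * n))) : Finset (Fin n) :=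
  (e.filter (fun x => x.1 < n)).image dpr

/-- vertices whose high copy is in `e` -/
def highs (e : Finset (Fin (2 * n))) : Finset (Fin n) :=
  (e.filter (fun x => ¬ x.1 < n)).image dpr

def twins (e : Finset (Fin (2 * n))) : ℕ := (lows e ∩ highs e).card

lemma mem_lows {v : Fin n} {e : Finset (Fin (2 * n))} : v ∈ lows e ↔ dlo v ∈ e := by
  constructor
  · intro hv
    obtain ⟨x, hx, rfl⟩ := Finset.mem_image.mp hv
    rw [Finset.mem_filter] at hx
    rw [eq_dlo_of_lt hx.2]
    exact hx.1
  · intro hv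
    exact Finset.mem_image.mpr ⟨dlo v, Finset.mem_filter.mpr ⟨hv, v.2⟩, dpr_dlo v⟩

lemma mem_highs {v : Fin n} {e : Finset (Fin (2 * n))} : v ∈ highs e ↔ dhi v ∈ e := by
  constructor
  · intro hv
    obtain ⟨x, hx, rfl⟩ := Finset.mem_image.mp hv
    rw [Finset.mem_filter] at hx
    rw [eq_dhi_of_ge (by omega)]
    exact hx.1
  · intro hv
    refine Finset.mem_image.mpr ⟨dhi v, Finset.mem_filter.mpr ⟨hv, by simp [dhi]⟩, dpr_dhi v⟩

lemma lows_mono {e S : Finset (Fin (2 * n))} (h : e ⊆ S) : lows e ⊆ lows S := by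
  intro v hv; exact mem_lows.mpr (h (mem_lows.mp hv))

lemma highs_mono {e S : Finset (Fin (2 * n))} (h : e ⊆ S) : highs e ⊆ highs S := by
  intro v hv; exact mem_highs.mpr (h (mem_highs.mp hv))

lemma card_eq_lows_highs (e : Finset (Fin (2 * n))) :
    e.card = (lows e).card + (highs e).card := by
  rw [← Finset.card_filter_add_card_filter_not (s := e) (fun x => x.1 < n)]
  congr 1
  · rw [lows, Finset.card_image_of_injOn]
    intro x hx y hy hxy
    rw [Finset.mem_coe, Finset.mem_filter] at hx hy
    have : x.1 % n = y.1 % n := congrArg Fin.val hxy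
    rw [Nat.mod_eq_of_lt hx.2, Nat.mod_eq_of_lt hy.2] at this
    exact Fin.ext this
  · rw [highs, Finset.card_image_of_injOn]
    intro x hx y hy hxy
    rw [Finset.mem_coe, Finset.mem_filter] at hx hy
    have hx2 := x.2; have hy2 := y.2
    have h1 : dhi (dpr x) = dhi (dpr y) := by rw [hxy]
    rw [eq_dhi_of_ge (by omega), eq_dhi_of_ge (by omega)] at h1
    exact h1

lemma image_dpr (e : Finset (Fin (2 * n))) : e.image dpr = lows e ∪ highs e := by
  ext v
  rw [Finset.mem_union, mem_lows, mem_highs, Finset.mem_image]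
  constructor
  · rintro ⟨x, hx, rfl⟩
    by_cases h : x.1 < n
    · left; rw [eq_dlo_of_lt h]; exact hx
    · right; rw [eq_dhi_of_ge (by omega)]; exact hx
  · rintro (h | h)
    · exact ⟨dlo v, h, dpr_dlo v⟩
    · exact ⟨dhi v, h, dpr_dhi v⟩

lemma build (S : Finset (Fin (2 * n))) (A B C : Finset (Fin n))
    (hA : A ⊆ lows S ∩ highs S) (hB : B ⊆ lows S) (hC : C ⊆ highs S)
    (hAB : Disjoint A B) (hAC : Disjoint A C) (hBC : Disjoint B C) :
    ∃ e ⊆ S, e.card = 2 * A.card + B.card + C.card ∧ twins e = A.card ∧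
      e.image dpr = A ∪ B ∪ C := by
  classical
  refine ⟨((A ∪ B).image dlo) ∪ ((A ∪ C).image dhi), ?_, ?_⟩
  · intro x hx
    rw [Finset.mem_union, Finset.mem_image, Finset.mem_image] at hx
    rcases hx with ⟨v, hv, rfl⟩ | ⟨v, hv, rfl⟩
    · rcases Finset.mem_union.mp hv with h | h
      · exact mem_lows.mp ((Finset.inter_subset_left) (hA h))
      · exact mem_lows.mp (hB h)
    · rcases Finset.mem_union.mp hv with h | h
      · exact mem_highs.mp ((Finset.inter_subset_right) (hA h))
      · exact mem_highs.mp (hC h)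
  · have hlows : lows (((A ∪ B).image dlo) ∪ ((A ∪ C).image dhi)) = A ∪ B := by
      ext v
      rw [mem_lows, Finset.mem_union, Finset.mem_image, Finset.mem_image]
      constructor
      · rintro (⟨w, hw, hww⟩ | ⟨w, hw, hww⟩)
        · rwa [← dlo_injective hww]
        · exact absurd hww.symm (dlo_ne_dhi v w)
      · intro h; exact Or.inl ⟨v, h, rfl⟩
    have hhighs : highs (((A ∪ B).image dlo) ∪ ((A ∪ C).image dhi)) = A ∪ C := by
      ext v
      rw [mem_highs, Finset.mem_union, Finset.mem_image, Finset.mem_image]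
      constructor
      · rintro (⟨w, hw, hww⟩ | ⟨w, hw, hww⟩)
        · exact absurd hww (dlo_ne_dhi w v)
        · rwa [← dhi_injective hww]
      · intro h; exact Or.inr ⟨v, h, rfl⟩
    have hABC : (A ∪ B) ∩ (A ∪ C) = A := by
      ext v
      simp only [Finset.mem_inter, Finset.mem_union]
      constructor
      · rintro ⟨h1 | h1, h2 | h2⟩
        · exact h1
        · exact h1
        · exact h2
        · exact absurd h2 (Finset.disjoint_left.mp hBC h1)
      · intro h; exact ⟨Or.inl h, Or.inl h⟩
    refine ⟨?_, ?_, ?_⟩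
    · rw [card_eq_lows_highs, hlows, hhighs,
        Finset.card_union_of_disjoint hAB, Finset.card_union_of_disjoint hAC]
      ring
    · rw [twins, hlows, hhighs, hABC]
    · rw [image_dpr, hlows, hhighs, hABC.symm]
      ext v
      simp only [Finset.mem_union, Finset.mem_inter]
      tauto

lemma exists_edge (S : Finset (Fin (2 * n))) (k j : ℕ) (hj : j ≤ twins S)
    (h2j : 2 * j ≤ k) (hk : k + twins S ≤ S.card + j) :
    ∃ e ⊆ S, e.card = k ∧ twins e = j := by
  classical
  set L := lows S
  set H := highs S
  have hcardU : (L ∪ H).card + twins S = S.card := by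
    rw [twins, Finset.card_union_add_card_inter, ← card_eq_lows_highs]
  obtain ⟨A, hAsub, hAcard⟩ := Finset.exists_subset_card_eq (s := L ∩ H) (n := j) hj
  have hAU : A ⊆ L ∪ H := hAsub.trans ((Finset.inter_subset_left).trans Finset.subset_union_left)
  have hUA : ((L ∪ H) \ A).card = (L ∪ H).card - j := by
    rw [Finset.card_sdiff_of_subset hAU, hAcard]
  have hAle : j ≤ (L ∪ H).card := hAcard ▸ Finset.card_le_card hAU
  obtain ⟨D, hDsub, hDcard⟩ := Finset.exists_subset_card_eq
    (s := (L ∪ H) \ A) (n := k - 2 * j) (by rw [hUA]; omega)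
  obtain ⟨e, heS, hecard, hetw, _⟩ := build S A (D ∩ L) (D \ L) hAsub
    (Finset.inter_subset_right)
    (by intro x hx
        rcases Finset.mem_union.mp (Finset.mem_sdiff.mp (hDsub (Finset.mem_sdiff.mp hx).1)).1
          with h | h
        · exact absurd h (Finset.mem_sdiff.mp hx).2
        · exact h)
    (Finset.disjoint_left.mpr fun x hxA hxB =>
      (Finset.mem_sdiff.mp (hDsub (Finset.mem_inter.mp hxB).1)).2 hxA)
    (Finset.disjoint_left.mpr fun x hxA hxC =>
      (Finset.mem_sdiff.mp (hDsub (Finset.mem_sdiff.mp hxC).1)).2 hxA)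
    (Finset.disjoint_left.mpr fun x hxB hxC =>
      (Finset.mem_sdiff.mp hxC).2 (Finset.mem_inter.mp hxB).2)
  refine ⟨e, heS, ?_, by rw [hetw, hAcard]⟩
  rw [hecard, hAcard]
  have : (D ∩ L).card + (D \ L).card = D.card := Finset.card_inter_add_card_sdiff D L
  omega

lemma lift (S : Finset (Fin (2 * n))) (e0 : Finset (Fin n))
    (he0 : e0 ⊆ lows S ∪ highs S) :
    ∃ e ⊆ S, e.card = e0.card ∧ twins e = 0 ∧ e.image dpr = e0 := by
  classical
  obtain ⟨e, heS, hecard, hetw, heim⟩ := build S ∅ (e0 ∩ lows S) (e0 \ lows S)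
    (Finset.empty_subset _)
    (Finset.inter_subset_right)
    (by intro x hx
        rcases Finset.mem_union.mp (he0 (Finset.mem_sdiff.mp hx).1) with h | h
        · exact absurd h (Finset.mem_sdiff.mp hx).2
        · exact h)
    (Finset.disjoint_left.mpr fun x hx => absurd hx (Finset.notMem_empty x))
    (Finset.disjoint_left.mpr fun x hx => absurd hx (Finset.notMem_empty x))
    (Finset.disjoint_left.mpr fun x hxB hxC =>
      (Finset.mem_sdiff.mp hxC).2 (Finset.mem_inter.mp hxB).2)
  have hsplit : (e0 ∩ lows S) ∪ (e0 \ lows S) = e0 := by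
    rw [Finset.union_comm]; exact Finset.sdiff_union_inter e0 (lows S)
  have hccard : (e0 ∩ lows S).card + (e0 \ lows S).card = e0.card :=
    Finset.card_inter_add_card_sdiff e0 (lows S)
  refine ⟨e, heS, by rw [hecard]; simp only [Finset.card_empty]; omega, by simpa using hetw, ?_⟩
  rw [heim]
  rw [Finset.empty_union, hsplit]

end Stmt5Aux

open Stmt5Aux in
theorem stmt_5 (k p q n : ℕ) (hk : 5 ≤ k) (hko : Odd k)
    (hp : k + 2 ≤ p) (hq : k + 2 ≤ q) (hn : 1 ≤ n)
    (h : ∃ χ : Finset (Fin n) → Bool, IsColoring (p - 1) q k n χ) :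
    ∃ χ' : Finset (Fin (2 * n)) → Bool, IsColoring p q k (2 * n) χ' := by
  classical
  obtain ⟨χ, hblue, hred⟩ := h
  obtain ⟨m, hm⟩ := hko
  refine ⟨fun e => if twins e = 0 then χ (e.image dpr) else decide (Odd (twins e)), ?_, ?_⟩
  · -- blue condition: every p-set contains a blue k-set
    intro S hS
    set t := twins S with ht
    have hcardU : (lows S ∪ highs S).card + t = S.card := by
      rw [ht, twins, Finset.card_union_add_card_inter, ← card_eq_lows_highs]
    have h2t : 2 * t ≤ S.card := by
      have h1 : lows S ∩ highs S ⊆ lows S := Finset.inter_subset_left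
      have h2 : lows S ∩ highs S ⊆ highs S := Finset.inter_subset_right
      have := Finset.card_le_card h1
      have := Finset.card_le_card h2
      have := card_eq_lows_highs S
      have htx : t = (lows S ∩ highs S).card := ht
      omega
    by_cases htle : t ≤ 1
    · -- lift a blue edge from a (p-1)-subset of the projection
      have hUcard : p - 1 ≤ (lows S ∪ highs S).card := by omega
      obtain ⟨W, hWsub, hWcard⟩ := Finset.exists_subset_card_eq hUcard
      obtain ⟨e0, he0W, he0card, he0blue⟩ := hblue W hWcard
      obtain ⟨e, heS, hecard, hetw, heim⟩ := lift S e0 (he0W.trans hWsub)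
      exact ⟨e, heS, by rw [hecard, he0card], by simp [hetw, heim, he0blue]⟩
    · -- build an edge with an even positive number of twin pairs
      push_neg at htle
      have hj : ∃ j : ℕ, j % 2 = 0 ∧ 1 ≤ j ∧ j ≤ t ∧ 2 * j ≤ k ∧ k + t ≤ S.card + j := by
        rcases Nat.lt_or_ge (k + t) (p + 2) with hc | hc
        · exact ⟨2, by omega, by omega, by omega, by omega, by omega⟩
        · rcases Nat.even_or_odd (k + t - p) with he | he
          · obtain ⟨c, hc2⟩ := he
            exact ⟨k + t - p, by omega, by omega, by omega, by omega, by omega⟩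
          · obtain ⟨c, hc2⟩ := he
            exact ⟨k + t - p + 1, by omega, by omega, by omega, by omega, by omega⟩
      obtain ⟨j, hj2, hj1, hjt, hjk, hjc⟩ := hj
      obtain ⟨e, heS, hecard, hetw⟩ := exists_edge S k j (by omega) hjk (by omega)
      refine ⟨e, heS, hecard, ?_⟩
      simp only [hetw]
      rw [if_neg (by omega)]
      simp only [decide_eq_false_iff_not]
      rw [Nat.odd_iff]
      omega
  · -- red condition: every q-set contains a red k-set
    intro S hS
    set t := twins S with ht
    have hcardU : (lows S ∪ highs S).card + t = S.card := by
      rw [ht, twins, Finset.card_union_add_card_inter, ← card_eq_lows_highs]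
    have h2t : 2 * t ≤ S.card := by
      have h1 : lows S ∩ highs S ⊆ lows S := Finset.inter_subset_left
      have h2 : lows S ∩ highs S ⊆ highs S := Finset.inter_subset_right
      have := Finset.card_le_card h1
      have := Finset.card_le_card h2
      have := card_eq_lows_highs S
      have htx : t = (lows S ∩ highs S).card := ht
      omega
    by_cases ht0 : t = 0
    · -- lift a red edge from the projection, which has q elements
      have hUcard : (lows S ∪ highs S).card = q := by omega
      obtain ⟨e0, he0U, he0card, he0red⟩ := hred (lows S ∪ highs S) hUcard
      obtain ⟨e, heS, hecard, hetw, heim⟩ := lift S e0 he0U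
      exact ⟨e, heS, by rw [hecard, he0card], by simp [hetw, heim, he0red]⟩
    · -- build an edge with an odd number of twin pairs
      have hj : ∃ j : ℕ, j % 2 = 1 ∧ j ≤ t ∧ 2 * j ≤ k ∧ k + t ≤ S.card + j := by
        rcases Nat.lt_or_ge (k + t) (q + 1) with hc | hc
        · exact ⟨1, by omega, by omega, by omega, by omega⟩
        · rcases Nat.even_or_odd (k + t - q) with he | he
          · obtain ⟨c, hc2⟩ := he
            exact ⟨k + t - q + 1, by omega, by omega, by omega, by omega⟩
          · obtain ⟨c, hc2⟩ := he
            exact ⟨k + t - q, by omega, by omega, by omega, by omega⟩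
      obtain ⟨j, hj2, hjt, hjk, hjc⟩ := hj
      obtain ⟨e, heS, hecard, hetw⟩ := exists_edge S k j hjt hjk (by omega)
      refine ⟨e, heS, hecard, ?_⟩
      simp only [hetw]
      rw [if_neg (by omega)]
      simp only [decide_eq_true_eq]
      rw [Nat.odd_iff]
      omega
end

section
/- Let k ≥ 4, p ≥ k+2, q ≥ k+1 and n ≥ 1 be natural numbers, and set d = ⌊(q-1)/(k-2)⌋ (natural number division). If there exists a (p-1, q; k)-coloring of Fin n, then there exists a (p, q; k)-coloring of Fin (d*n). (This is the transfer form of the recurrence r_k(p,q) ≥ ⌊(q−1)/(k−2)⌋·(r_k(p-1,q) − 1) + 1.) -/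
/-! Take `d = ⌊(q - 1)/(k - 2)⌋` disjoint copies (blocks) of the given coloring. A `k`-edge inside
a block keeps its color, an edge with exactly one vertex outside some block is red, every other
edge is blue. A `q`-set meets some block in at least `k - 1` points by pigeonhole, since
`d (k - 2) < q`, so it contains either a red edge of that block or a red edge with one vertex
outside it. A `p`-set either meets a block in `p - 1` points, and then contains a blue edge of
that block, or it contains a `k`-set meeting every block in at most `k - 2` points, which is blue;
building this `k`-set from `k - 2` points of a large block and `2` points outside it is where
`k ≥ 4` is needed. -/

open Finset

variable {α β γ : Type*}

def NoMonoClique (k : ℕ) (χ : Finset α → Bool) (c : Bool) (a : ℕ) : Prop :=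
  ∀ S : Finset α, #S = a → ∃ e ⊆ S, #e = k ∧ χ e = !c

lemma isColoring_iff {a b k n : ℕ} {χ : Finset (Fin n) → Bool} :
    IsColoring a b k n χ ↔ NoMonoClique k χ true a ∧ NoMonoClique k χ false b :=
  Iff.rfl

namespace NoMonoClique

variable {k a : ℕ} {χ : Finset α → Bool} {c : Bool}

lemma exists_of_le_card (h : NoMonoClique k χ c a) {S : Finset α} (hS : a ≤ #S) :
    ∃ e ⊆ S, #e = k ∧ χ e = !c := by
  obtain ⟨T, hTS, hT⟩ := exists_subset_card_eq hS
  obtain ⟨e, heT, he⟩ := h T hT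
  exact ⟨e, heT.trans hTS, he⟩

lemma comap (h : NoMonoClique k χ c a) (g : β ↪ α) :
    NoMonoClique k (fun e => χ (e.map g)) c a := by
  intro S hS
  obtain ⟨e, heS, hek, hec⟩ := h (S.map g) (by rw [card_map, hS])
  obtain ⟨u, huS, rfl⟩ := subset_map_iff.1 heS
  exact ⟨u, huS, by rw [← hek, card_map], hec⟩

end NoMonoClique

lemma exists_subset_card_eq_forall_card_fiber_le [DecidableEq β] [DecidableEq γ] (f : γ → β)
    {S : Finset γ} {k : ℕ} (hk : 4 ≤ k) (hkS : k ≤ #S) (hS : ∀ b, #{v ∈ S | f v = b} + 2 ≤ #S) :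
    ∃ e ⊆ S, #e = k ∧ ∀ b, #{v ∈ e | f v = b} + 2 ≤ k := by
  by_cases hbig : ∃ b, k - 1 ≤ #{v ∈ S | f v = b}
  · obtain ⟨b, hb⟩ := hbig
    set A := {v ∈ S | f v = b}
    set C := {v ∈ S | ¬f v = b}
    have hAC : #A + #C = #S := card_filter_add_card_filter_not _
    have hA : #A + 2 ≤ #S := hS b
    obtain ⟨tA, htA, htA_card⟩ := exists_subset_card_eq (s := A) (n := k - 2) (by omega)
    obtain ⟨tC, htC, htC_card⟩ := exists_subset_card_eq (s := C) (n := 2) (by omega)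
    have htA_fiber : ∀ v ∈ tA, f v = b := fun v hv => (mem_filter.1 (htA hv)).2
    have htC_fiber : ∀ v ∈ tC, ¬f v = b := fun v hv => (mem_filter.1 (htC hv)).2
    have hdisj : Disjoint tA tC :=
      disjoint_left.2 fun v hvA hvC => htC_fiber v hvC (htA_fiber v hvA)
    refine ⟨tA ∪ tC, union_subset (htA.trans (filter_subset _ _))
      (htC.trans (filter_subset _ _)), by rw [card_union_of_disjoint hdisj]; omega, ?_⟩
    intro b'
    have hle : #{v ∈ tA ∪ tC | f v = b'} ≤ #{v ∈ tA | f v = b'} + #{v ∈ tC | f v = b'} := by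
      rw [filter_union]; exact card_union_le _ _
    by_cases hb' : b' = b
    · subst hb'
      rw [filter_false_of_mem htC_fiber, card_empty] at hle
      have := card_filter_le tA (f · = b')
      omega
    · have htA_fiber' : ∀ v ∈ tA, ¬f v = b' := fun v hv hvb => hb' (hvb ▸ htA_fiber v hv)
      rw [filter_false_of_mem htA_fiber', card_empty] at hle
      have := card_filter_le tC (f · = b')
      omega
  · push Not at hbig
    obtain ⟨e, heS, he⟩ := exists_subset_card_eq hkS
    refine ⟨e, heS, he, fun b => ?_⟩
    have := card_le_card (filter_subset_filter (f · = b) heS)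
    have := hbig b
    omega

section BlockColoring

open Classical

noncomputable def blockColoring (χ : Finset α → Bool) (e : Finset (β × α)) : Bool :=
  if ∃ b, ∀ v ∈ e, v.1 = b then χ (e.image Prod.snd)
  else decide (∃ b, #{v ∈ e | v.1 = b} + 1 = #e)

variable {χ : Finset α → Bool} {e : Finset (β × α)}

lemma blockColoring_of_forall_fst_eq {b : β} (he : ∀ v ∈ e, v.1 = b) :
    blockColoring χ e = χ (e.image Prod.snd) :=
  if_pos ⟨b, he⟩

lemma blockColoring_eq_false (he : ∀ b, #{v ∈ e | v.1 = b} + 2 ≤ #e) :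
    blockColoring χ e = false := by
  rw [blockColoring, if_neg, decide_eq_false]
  · rintro ⟨b, hb⟩
    have := he b
    omega
  · rintro ⟨b, hb⟩
    have := he b
    rw [filter_true_of_mem hb] at this
    omega

lemma blockColoring_eq_true {b : β} (hb : #{v ∈ e | v.1 = b} + 1 = #e) (he : 2 ≤ #e) :
    blockColoring χ e = true := by
  rw [blockColoring, if_neg, decide_eq_true ⟨b, hb⟩]
  rintro ⟨b', hb'⟩
  by_cases hbb' : b = b'
  · subst hbb'
    rw [filter_true_of_mem hb'] at hb
    omega
  · have hb_empty : ∀ v ∈ e, ¬v.1 = b := fun v hv hvb => hbb' (hvb ▸ hb' v hv)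
    rw [filter_false_of_mem hb_empty, card_empty] at hb
    omega

variable {k a : ℕ} {c : Bool}

lemma NoMonoClique.exists_blockColoring_eq (h : NoMonoClique k χ c a) {S : Finset (β × α)}
    {b : β} (hS : a ≤ #{v ∈ S | v.1 = b}) :
    ∃ e ⊆ S, #e = k ∧ blockColoring χ e = !c := by
  set F := {v ∈ S | v.1 = b}
  have hF : ∀ v ∈ F, v.1 = b := fun v hv => (mem_filter.1 hv).2
  have hinj : Set.InjOn Prod.snd (F : Set (β × α)) := fun v hv w hw hvw =>
    Prod.ext ((hF v hv).trans (hF w hw).symm) hvw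
  obtain ⟨e₀, he₀, he₀_card, he₀_color⟩ :=
    h.exists_of_le_card (S := F.image Prod.snd) (by rwa [card_image_of_injOn hinj])
  refine ⟨e₀.map (Function.Embedding.sectR b α), ?_, by rw [card_map, he₀_card], ?_⟩
  · intro v hv
    obtain ⟨x, hx, rfl⟩ := mem_map.1 hv
    obtain ⟨w, hw, rfl⟩ := mem_image.1 (he₀ hx)
    have : w = (b, w.2) := Prod.ext (hF w hw) rfl
    exact filter_subset _ _ (this ▸ hw)
  · have hsnd : (e₀.map (Function.Embedding.sectR b α)).image Prod.snd = e₀ := by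
      ext; simp
    rw [blockColoring_of_forall_fst_eq (b := b) (by simp), hsnd, he₀_color]

theorem NoMonoClique.blockColoring_true {p : ℕ} (hk : 4 ≤ k) (hkp : k ≤ p)
    (h : NoMonoClique k χ true (p - 1)) :
    NoMonoClique k (blockColoring (β := β) χ) true p := by
  intro S hS
  by_cases hbig : ∃ b, p - 1 ≤ #{v ∈ S | v.1 = b}
  · obtain ⟨b, hb⟩ := hbig
    exact h.exists_blockColoring_eq hb
  · push Not at hbig
    obtain ⟨e, heS, he, hfiber⟩ := exists_subset_card_eq_forall_card_fiber_le Prod.fst hk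
      (hS ▸ hkp) fun b => by have := hbig b; omega
    exact ⟨e, heS, he, blockColoring_eq_false (he ▸ hfiber)⟩

theorem NoMonoClique.blockColoring_false [Fintype β] {q : ℕ} (hk : 2 ≤ k)
    (hq : Fintype.card β * (k - 2) < q) (h : NoMonoClique k χ false q) :
    NoMonoClique k (blockColoring (β := β) χ) false q := by
  intro S hS
  obtain ⟨b, -, hb⟩ := exists_lt_card_fiber_of_mul_lt_card_of_maps_to
    (s := S) (t := univ) (f := Prod.fst) (fun _ _ => mem_univ _) (by rwa [card_univ, hS])
  by_cases hall : ∀ v ∈ S, v.1 = b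
  · exact h.exists_blockColoring_eq (b := b) (by rw [filter_true_of_mem hall, hS])
  · push Not at hall
    obtain ⟨x, hxS, hxb⟩ := hall
    obtain ⟨t, ht, ht_card⟩ := exists_subset_card_eq (show k - 1 ≤ #{v ∈ S | v.1 = b} by omega)
    have ht_fiber : ∀ v ∈ t, v.1 = b := fun v hv => (mem_filter.1 (ht hv)).2
    have hxt : x ∉ t := fun hx => hxb (ht_fiber x hx)
    have hcard : #(insert x t) = k := by rw [card_insert_of_notMem hxt]; omega
    have hfiber : {v ∈ insert x t | v.1 = b} = t := by
      rw [filter_insert, if_neg hxb, filter_true_of_mem ht_fiber]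
    refine ⟨insert x t, insert_subset hxS (ht.trans (filter_subset _ _)), hcard,
      blockColoring_eq_true (b := b) ?_ (by omega)⟩
    rw [hfiber, hcard]
    omega

end BlockColoring

theorem stmt_6_general (k p q n : ℕ) (hk : 4 ≤ k)
    (hp : k + 2 ≤ p) (hq : k + 1 ≤ q)
    (h : ∃ χ : Finset (Fin n) → Bool, IsColoring (p - 1) q k n χ) :
    ∃ χ' : Finset (Fin ((q - 1) / (k - 2) * n)) → Bool,
      IsColoring p q k ((q - 1) / (k - 2) * n) χ' := by
  obtain ⟨χ, hχ⟩ := h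
  obtain ⟨hred, hblue⟩ := isColoring_iff.1 hχ
  have hd : Fintype.card (Fin ((q - 1) / (k - 2))) * (k - 2) < q := by
    rw [Fintype.card_fin]
    exact (Nat.div_mul_le_self _ _).trans_lt (by omega)
  exact ⟨_, isColoring_iff.2
    ⟨(hred.blockColoring_true hk (by omega)).comap finProdFinEquiv.symm.toEmbedding,
      (hblue.blockColoring_false (by omega) hd).comap finProdFinEquiv.symm.toEmbedding⟩⟩

theorem stmt_6 (k p q n : ℕ) (hk : 4 ≤ k)
    (hp : k + 2 ≤ p) (hq : k + 1 ≤ q) (hn : 1 ≤ n)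
    (h : ∃ χ : Finset (Fin n) → Bool, IsColoring (p - 1) q k n χ) :
    ∃ χ' : Finset (Fin ((q - 1) / (k - 2) * n)) → Bool,
      IsColoring p q k ((q - 1) / (k - 2) * n) χ' :=
  stmt_6_general k p q n hk hp hq h
end

section
/- (Lemma 3.1, 'constant'.) Fix natural numbers k ≥ 1, d ≥ 1, p₀ and q₀. Suppose c : Multiset ℕ → Bool satisfies the blue covering condition for (p₀, k, d) and the red covering condition for (q₀, k, d). Then for every p ≥ p₀ and every q ≥ q₀, c satisfies the blue covering condition for (p, k, d) and the red covering condition for (q, k, d). -/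
/-- A primal cardinality vector: a multiset of positive naturals. -/
def IsPCV (m : Multiset ℕ) : Prop := ∀ x ∈ m, 0 < x

/-- `Contains m' m` (the paper's `m' ≤_c m`): the elements of `m'` can be
matched bijectively with elements of a submultiset of `m` so that each element
of `m'` is at most its partner. -/
def Contains (m' m : Multiset ℕ) : Prop :=
  ∃ t : Multiset ℕ, t ≤ m ∧ Multiset.Rel (· ≤ ·) m' t

/-- The blue covering condition for `(s, k, d)`: every pcv of sum `s` and
length at most `d` contains a blue (`false`) pcv of sum `k` and length at most `d`. -/
def BlueCovering (c : Multiset ℕ → Bool) (s k d : ℕ) : Prop :=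
  ∀ m : Multiset ℕ, IsPCV m → m.card ≤ d → m.sum = s →
    ∃ m' : Multiset ℕ, IsPCV m' ∧ m'.card ≤ d ∧ m'.sum = k ∧
      Contains m' m ∧ c m' = false

/-- The red covering condition for `(s, k, d)`. -/
def RedCovering (c : Multiset ℕ → Bool) (s k d : ℕ) : Prop :=
  ∀ m : Multiset ℕ, IsPCV m → m.card ≤ d → m.sum = s →
    ∃ m' : Multiset ℕ, IsPCV m' ∧ m'.card ≤ d ∧ m'.sum = k ∧
      Contains m' m ∧ c m' = true

lemma rel_sub {r : ℕ → ℕ → Prop} {m t s : Multiset ℕ}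
    (h : Multiset.Rel r m t) (hs : s ≤ m) : ∃ t' ≤ t, Multiset.Rel r s t' := by
  obtain ⟨u, rfl⟩ := Multiset.le_iff_exists_add.mp hs
  rw [Multiset.rel_add_left] at h
  obtain ⟨t₁, t₂, h₁, _, rfl⟩ := h
  exact ⟨t₁, Multiset.le_add_right _ _, h₁⟩

lemma Contains.trans {a b c : Multiset ℕ} (h₁ : Contains a b) (h₂ : Contains b c) :
    Contains a c := by
  obtain ⟨t, htb, hat⟩ := h₁
  obtain ⟨u, huc, hbu⟩ := h₂
  obtain ⟨u', hu', htu'⟩ := rel_sub hbu htb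
  exact ⟨u', le_trans hu' huc, Multiset.Rel.trans _ hat htu'⟩

lemma Contains.refl (m : Multiset ℕ) : Contains m m :=
  ⟨m, le_refl m, Multiset.rel_refl_of_refl_on fun _ _ => le_refl _⟩

lemma reduce : ∀ n : ℕ, ∀ m : Multiset ℕ, ∀ s₀ : ℕ, IsPCV m → m.sum - s₀ = n → s₀ ≤ m.sum →
    ∃ m₀ : Multiset ℕ, IsPCV m₀ ∧ m₀.card ≤ m.card ∧ m₀.sum = s₀ ∧ Contains m₀ m := by
  intro n
  induction n with
  | zero =>
    intro m s₀ hp hn hle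
    have : m.sum = s₀ := le_antisymm (by omega) hle
    exact ⟨m, hp, le_refl _, this, Contains.refl m⟩
  | succ n ih =>
    intro m s₀ hp hn hle
    have hpos : 0 < m.sum := by omega
    have hne : m ≠ 0 := by rintro rfl; simp at hpos
    obtain ⟨a, ha⟩ := Multiset.exists_mem_of_ne_zero hne
    obtain ⟨m', rfl⟩ := Multiset.exists_cons_of_mem ha
    have hapos : 0 < a := hp a ha
    have hsum : (a ::ₘ m').sum = a + m'.sum := by simp
    by_cases h1 : a = 1
    · subst h1
      obtain ⟨m₀, h₀p, h₀c, h₀s, h₀con⟩ := ih m' s₀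
        (fun x hx => hp x (Multiset.mem_cons_of_mem hx)) (by omega) (by omega)
      refine ⟨m₀, h₀p, le_trans h₀c (by simp), h₀s,
        h₀con.trans ⟨m', Multiset.le_cons_self _ _, Multiset.rel_refl_of_refl_on fun _ _ => le_refl _⟩⟩
    · have h2 : 2 ≤ a := by omega
      have hm₁ : ((a-1) ::ₘ m').sum = (a ::ₘ m').sum - 1 := by simp; omega
      obtain ⟨m₀, h₀p, h₀c, h₀s, h₀con⟩ := ih ((a-1) ::ₘ m') s₀
        (by intro x hx
            rcases Multiset.mem_cons.mp hx with rfl | hx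
            · omega
            · exact hp x (Multiset.mem_cons_of_mem hx))
        (by omega) (by omega)
      refine ⟨m₀, h₀p, le_trans h₀c (by simp), h₀s, h₀con.trans
        ⟨a ::ₘ m', le_refl _, Multiset.Rel.cons (by omega)
          (Multiset.rel_refl_of_refl_on fun _ _ => le_refl _)⟩⟩

theorem stmt_7 (k d p₀ q₀ : ℕ) (hk : 1 ≤ k) (hd : 1 ≤ d)
    (c : Multiset ℕ → Bool)
    (hblue : BlueCovering c p₀ k d) (hred : RedCovering c q₀ k d) :
    ∀ p q : ℕ, p₀ ≤ p → q₀ ≤ q → BlueCovering c p k d ∧ RedCovering c q k d := by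
  intro p q hp hq
  constructor
  · intro m hpcv hcard hsum
    obtain ⟨m₀, h₀p, h₀c, h₀s, h₀con⟩ := reduce (m.sum - p₀) m p₀ hpcv rfl (by omega)
    obtain ⟨m', h'p, h'c, h's, h'con, h'col⟩ := hblue m₀ h₀p (le_trans h₀c hcard) h₀s
    exact ⟨m', h'p, h'c, h's, h'con.trans h₀con, h'col⟩
  · intro m hpcv hcard hsum
    obtain ⟨m₀, h₀p, h₀c, h₀s, h₀con⟩ := reduce (m.sum - q₀) m q₀ hpcv rfl (by omega)
    obtain ⟨m', h'p, h'c, h's, h'con, h'col⟩ := hred m₀ h₀p (le_trans h₀c hcard) h₀s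
    exact ⟨m', h'p, h'c, h's, h'con.trans h₀con, h'col⟩
end

section
/- (Lemma 4.5, 'partition_2'.) Let k, p, q, d, n be natural numbers with k ≥ 1, p ≥ k+1, q ≥ k, d ≥ 1. For i : Fin d let Vᵢ = {i} × (Fin n) viewed as a Finset of Fin d × Fin n. Let χ : Finset (Fin d × Fin n) → Bool (true = red, false = blue). Assume: (H1) for each i, every (p-1)-element subset S ⊆ Vᵢ contains a k-element subset e with χ e = false, and every q-element subset S ⊆ Vᵢ contains a k-element subset e with χ e = true; (H2) every p-element subset X of Fin d × Fin n with (X ∩ Vᵢ).card ≤ p − 2 for all i contains a k-element subset e with χ e = false; (H3) every q-element subset Y of Fin d × Fin n with (Y ∩ Vᵢ).card ≤ q − 1 for all i contains a k-element subset e with χ e = true. Then every p-element subset of Fin d × Fin n contains a k-element subset e with χ e = false, and every q-element subset of Fin d × Fin n contains a k-element subset e with χ e = true; i.e., χ is a (p, q; k)-coloring of Fin d × Fin n. -/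
/-- The `i`-th part `Vᵢ = {i} × Fin n` of the vertex set `Fin d × Fin n`. -/
def part (d n : ℕ) (i : Fin d) : Finset (Fin d × Fin n) :=
  ({i} : Finset (Fin d)) ×ˢ (Finset.univ : Finset (Fin n))

theorem stmt_10 (k p q d n : ℕ) (hk : 1 ≤ k) (hp : k + 1 ≤ p) (hq : k ≤ q)
    (hd : 1 ≤ d) (χ : Finset (Fin d × Fin n) → Bool)
    (H1 : ∀ i : Fin d,
      (∀ S : Finset (Fin d × Fin n), S ⊆ part d n i → S.card = p - 1 →
        ∃ e ⊆ S, e.card = k ∧ χ e = false) ∧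
      (∀ S : Finset (Fin d × Fin n), S ⊆ part d n i → S.card = q →
        ∃ e ⊆ S, e.card = k ∧ χ e = true))
    (H2 : ∀ X : Finset (Fin d × Fin n), X.card = p →
      (∀ i : Fin d, (X ∩ part d n i).card ≤ p - 2) →
      ∃ e ⊆ X, e.card = k ∧ χ e = false)
    (H3 : ∀ Y : Finset (Fin d × Fin n), Y.card = q →
      (∀ i : Fin d, (Y ∩ part d n i).card ≤ q - 1) →
      ∃ e ⊆ Y, e.card = k ∧ χ e = true) :
    (∀ X : Finset (Fin d × Fin n), X.card = p →
      ∃ e ⊆ X, e.card = k ∧ χ e = false) ∧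
    (∀ Y : Finset (Fin d × Fin n), Y.card = q →
      ∃ e ⊆ Y, e.card = k ∧ χ e = true) := by
  constructor
  · intro X hX
    by_cases h : ∀ i : Fin d, (X ∩ part d n i).card ≤ p - 2
    · exact H2 X hX h
    · push_neg at h
      obtain ⟨i, hi⟩ := h
      have hle : p - 1 ≤ (X ∩ part d n i).card := by omega
      obtain ⟨S, hS, hScard⟩ := Finset.exists_subset_card_eq hle
      obtain ⟨e, he, hek, hec⟩ := (H1 i).1 S
        (hS.trans (Finset.inter_subset_right)) hScard
      exact ⟨e, he.trans (hS.trans Finset.inter_subset_left), hek, hec⟩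
  · intro Y hY
    by_cases h : ∀ i : Fin d, (Y ∩ part d n i).card ≤ q - 1
    · exact H3 Y hY h
    · push_neg at h
      obtain ⟨i, hi⟩ := h
      have hle : q ≤ (Y ∩ part d n i).card := by
        have := Finset.card_le_card (Finset.inter_subset_left : Y ∩ part d n i ⊆ Y)
        omega
      obtain ⟨S, hS, hScard⟩ := Finset.exists_subset_card_eq hle
      obtain ⟨e, he, hek, hec⟩ := (H1 i).2 S
        (hS.trans (Finset.inter_subset_right)) hScard
      exact ⟨e, he.trans (hS.trans Finset.inter_subset_left), hek, hec⟩
end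

section
/- (Corollary 2.5, realization of contained primal cardinality vectors.) Let α be a type with decidable equality, d a natural number, and V : Fin d → Finset α pairwise disjoint Finsets. For a Finset X of α, define its primal cardinality vector pcv(X) as the multiset over i : Fin d of the cardinalities (X ∩ V i).card, with all zero entries removed. Then for every Finset X and every multiset m of positive natural numbers with m ⊑ pcv(X), there exists a Finset Y ⊆ X with pcv(Y) = m. -/
/-- The primal cardinality vector of `X` with respect to the parts `V i`:
the multiset of the intersection cardinalities `(X ∩ V i).card` over `i : Fin d`,
with all zero entries removed. -/
def pcv {α : Type*} [DecidableEq α] {d : ℕ} (V : Fin d → Finset α)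
    (X : Finset α) : Multiset ℕ :=
  ((Finset.univ : Finset (Fin d)).val.map (fun i => (X ∩ V i).card)).filter
    (fun x => 0 < x)

/-!
Padding `m` with zeros and transporting the matching to the parts turns `m ⊑ pcv X` into a
vector `g` with `g i ≤ |X ∩ V i|` whose positive entries form `m`. Choosing `g i` elements of
each `X ∩ V i`, the union `Y` meets every part `V i` in exactly its own `g i` elements, because
the parts are disjoint; hence `pcv Y = m`.
-/

open Function

theorem Contains.mono_right {m n n' : Multiset ℕ} (h : Contains m n) (hn : n ≤ n') :
    Contains m n' :=
  let ⟨t, htn, hmt⟩ := h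
  ⟨t, htn.trans hn, hmt⟩

theorem Contains.exists_rel_filter_pos_eq {m n : Multiset ℕ} (h : Contains m n)
    (hm : ∀ x ∈ m, 0 < x) :
    ∃ n', Multiset.Rel (· ≤ ·) n' n ∧ n'.filter (0 < ·) = m := by
  obtain ⟨t, htn, hmt⟩ := h
  obtain ⟨u, rfl⟩ := Multiset.le_iff_exists_add.1 htn
  refine ⟨m + Multiset.replicate (Multiset.card u) 0, hmt.add ?_, ?_⟩
  · exact Multiset.rel_replicate_left.2 ⟨rfl, fun x _ => Nat.zero_le x⟩
  · rw [Multiset.filter_add, Multiset.filter_eq_self.2 hm,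
      Multiset.filter_eq_nil.2 fun x hx => by simp [Multiset.eq_of_mem_replicate hx], add_zero]

theorem Multiset.Nodup.exists_eq_map_of_rel_map {ι β γ : Type*} [Nonempty β]
    {r : β → γ → Prop} {f : ι → γ} {s : Multiset ι} (hs : s.Nodup) {m : Multiset β}
    (h : Multiset.Rel r m (s.map f)) :
    ∃ g : ι → β, m = s.map g ∧ ∀ i ∈ s, r (g i) (f i) := by
  classical
  induction s using Multiset.induction_on generalizing m with
  | empty => exact ⟨fun _ => Classical.arbitrary β, by simpa using h, by simp⟩
  | cons a s ih =>
    rw [Multiset.nodup_cons] at hs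
    rw [Multiset.map_cons, Multiset.rel_cons_right] at h
    obtain ⟨b, m, hb, hm, rfl⟩ := h
    obtain ⟨g, rfl, hg⟩ := ih hs.2 hm
    have hupdate : ∀ i ∈ s, update g a b i = g i := fun i hi =>
      update_of_ne (ne_of_mem_of_not_mem hi hs.1) _ _
    refine ⟨update g a b, ?_, ?_⟩
    · rw [Multiset.map_cons, Multiset.map_congr rfl hupdate, update_self]
    · intro i hi
      rcases Multiset.mem_cons.1 hi with rfl | hi
      · rwa [update_self]
      · rw [hupdate i hi]
        exact hg i hi

theorem Finset.biUnion_inter_of_pairwiseDisjoint {ι α : Type*} [DecidableEq α]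
    {V : ι → Finset α} (hV : Pairwise (Disjoint on V)) {s : Finset ι} {Z : ι → Finset α}
    (hZ : ∀ i, Z i ⊆ V i) {i : ι} (hi : i ∈ s) : s.biUnion Z ∩ V i = Z i := by
  ext x
  simp only [Finset.mem_inter, Finset.mem_biUnion]
  constructor
  · rintro ⟨⟨j, -, hxj⟩, hxi⟩
    obtain rfl : j = i := by_contra fun hji => Finset.disjoint_left.1 (hV hji) (hZ j hxj) hxi
    exact hxj
  · exact fun hx => ⟨⟨i, hi, hx⟩, hZ i hx⟩

theorem exists_subset_card_inter_eq {ι α : Type*} [Fintype ι] [DecidableEq α]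
    {V : ι → Finset α} (hV : Pairwise (Disjoint on V)) (X : Finset α) (g : ι → ℕ)
    (hg : ∀ i, g i ≤ (X ∩ V i).card) : ∃ Y ⊆ X, ∀ i, (Y ∩ V i).card = g i := by
  choose Z hZX hZ using fun i => Finset.exists_subset_card_eq (hg i)
  refine ⟨Finset.univ.biUnion Z, Finset.biUnion_subset.2 fun i _ => (hZX i).trans
    Finset.inter_subset_left, fun i => ?_⟩
  rw [Finset.biUnion_inter_of_pairwiseDisjoint hV (fun j => (hZX j).trans
    Finset.inter_subset_right) (Finset.mem_univ i), hZ]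

theorem stmt_12 {α : Type*} [DecidableEq α] {d : ℕ} (V : Fin d → Finset α)
    (hV : ∀ i j : Fin d, i ≠ j → Disjoint (V i) (V j)) :
    ∀ X : Finset α, ∀ m : Multiset ℕ, (∀ x ∈ m, 0 < x) →
      Contains m (pcv V X) → ∃ Y ⊆ X, pcv V Y = m := by
  intro X m hm hXm
  obtain ⟨n, hn, rfl⟩ := (hXm.mono_right (Multiset.filter_le _ _)).exists_rel_filter_pos_eq hm
  obtain ⟨g, rfl, hg⟩ := Finset.univ.nodup.exists_eq_map_of_rel_map hn
  obtain ⟨Y, hYX, hY⟩ := exists_subset_card_inter_eq hV X g fun i => hg i (Finset.mem_univ i)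
  exact ⟨Y, hYX, by simp only [pcv, hY]⟩
end

section
/- r_4(7,7) ≥ 3961: there exists a (7, 7; 4)-coloring of Fin 3960, i.e., a function χ : Finset (Fin 3960) → Bool such that every 7-element subset of Fin 3960 contains a 4-element subset e with χ e = false and also contains a 4-element subset e' with χ e' = true (no monochromatic 7-element set). -/
/-!
Erdős–Hajnal stepping up. Write the vertices, all below `2 ^ 12`, in binary and let `δ x y` be
the most significant bit in which `x` and `y` differ; for `x < y < z` one has
`δ x y ≠ δ y z` and `δ x z = max (δ x y) (δ y z)`. A 4-set `a < b < c < d` with consecutive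
deltas `d₁ d₂ d₃` gets the `ψ`-colour of `{d₁, d₂, d₃}` when `d₁ d₂ d₃` is monotone, and is red
or blue according as `d₂` is a peak or a valley, where `ψ` colours the triples of a 12-set
without a monochromatic 4-set. The six consecutive deltas of a 7-set either have an interior
peak (valley), giving a red (blue) 4-set, or contain a monotone run `e₁ e₂ e₃ e₄`; the 4-subsets
of the five vertices spanning that run then receive the `ψ`-colours of all four triples of
`{e₁, e₂, e₃, e₄}`, so both colours occur.
-/

namespace SteppingUp

def delta (x y : ℕ) : ℕ := Nat.log 2 (x ^^^ y)

lemma delta_comm (x y : ℕ) : delta x y = delta y x := by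
  rw [delta, delta, Nat.xor_comm]

lemma delta_self (x : ℕ) : delta x x = 0 := by
  simp [delta]

lemma delta_lt_iff {x y j : ℕ} (h : x ≠ y) : delta x y < j ↔ x / 2 ^ j = y / 2 ^ j := by
  rw [delta, Nat.log_lt_iff_lt_pow one_lt_two (xor_eq_zero_iff.not.2 h),
    ← Nat.div_eq_zero_iff_lt (Nat.two_pow_pos j), Nat.xor_div_two_pow, xor_eq_zero_iff]

lemma div_two_pow_eq_of_delta_lt {x y j : ℕ} (h : delta x y < j) : x / 2 ^ j = y / 2 ^ j := by
  obtain rfl | hxy := eq_or_ne x y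
  · rfl
  · exact (delta_lt_iff hxy).1 h

lemma delta_le_max (x y z : ℕ) : delta x z ≤ max (delta x y) (delta y z) := by
  obtain rfl | hxz := eq_or_ne x z
  · simp [delta_self]
  rw [← Nat.lt_succ_iff, delta_lt_iff hxz,
    div_two_pow_eq_of_delta_lt (Nat.lt_succ_of_le (le_max_left _ _)),
    div_two_pow_eq_of_delta_lt (Nat.lt_succ_of_le (le_max_right _ _))]

lemma delta_eq_max_of_ne {x y z : ℕ} (h : delta x y ≠ delta y z) :
    delta x z = max (delta x y) (delta y z) := by
  have h₁ := delta_le_max y x z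
  have h₂ := delta_le_max x z y
  rw [delta_comm y x] at h₁
  rw [delta_comm z y] at h₂
  have := delta_le_max x y z
  omega

lemma div_two_pow_delta {x y : ℕ} (h : x ≠ y) :
    x / 2 ^ delta x y ≠ y / 2 ^ delta x y ∧ x / 2 ^ delta x y / 2 = y / 2 ^ delta x y / 2 :=
  ⟨fun e => lt_irrefl _ ((delta_lt_iff h).2 e), by
    simpa only [Nat.div_div_eq_div_mul, ← pow_succ] using (delta_lt_iff h).1 (Nat.lt_succ_self _)⟩

/-- If `delta x y = delta y z = k`, then `x`, `y`, `z` lie in one dyadic block of length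
`2 ^ (k + 1)` but in pairwise different halves of it. -/
lemma delta_ne_delta {x y z : ℕ} (hxy : x < y) (hyz : y < z) : delta x y ≠ delta y z := by
  intro h
  obtain ⟨h₁, h₂⟩ := div_two_pow_delta hxy.ne
  obtain ⟨h₃, h₄⟩ := div_two_pow_delta hyz.ne
  rw [← h] at h₃ h₄
  have := Nat.div_le_div_right (c := 2 ^ delta x y) hxy.le
  have := Nat.div_le_div_right (c := 2 ^ delta x y) hyz.le
  omega

lemma delta_lt_of_lt_two_pow {x y m : ℕ} (hx : x < 2 ^ m) (hy : y < 2 ^ m) (h : x ≠ y) :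
    delta x y < m :=
  Nat.log_lt_of_lt_pow (xor_eq_zero_iff.not.2 h) (Nat.xor_lt_two_pow hx hy)

def upColor (ψ : ℕ → ℕ → ℕ → Bool) (d₁ d₂ d₃ : ℕ) : Bool :=
  if d₁ < d₂ ∧ d₂ < d₃ then ψ d₁ d₂ d₃
  else if d₃ < d₂ ∧ d₂ < d₁ then ψ d₃ d₂ d₁
  else decide (d₁ < d₂ ∧ d₃ < d₂)

lemma upColor_rev (ψ : ℕ → ℕ → ℕ → Bool) (d₁ d₂ d₃ : ℕ) :
    upColor ψ d₃ d₂ d₁ = upColor ψ d₁ d₂ d₃ := by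
  unfold upColor
  split_ifs <;> first | rfl | omega | simp only [and_comm]

lemma upColor_of_lt_of_lt (ψ : ℕ → ℕ → ℕ → Bool) {d₁ d₂ d₃ : ℕ} (h₁ : d₁ < d₂) (h₂ : d₂ < d₃) :
    upColor ψ d₁ d₂ d₃ = ψ d₁ d₂ d₃ :=
  if_pos ⟨h₁, h₂⟩

lemma upColor_of_turn (ψ : ℕ → ℕ → ℕ → Bool) {d₁ d₂ d₃ : ℕ} {col : Bool}
    (h₁ : decide (d₁ < d₂) = col) (h₂ : decide (d₂ < d₃) = !col) (h : d₂ ≠ d₃) :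
    upColor ψ d₁ d₂ d₃ = col := by
  unfold upColor
  cases col <;> simp only [decide_eq_true_eq, decide_eq_false_iff_not, Bool.not_true,
    Bool.not_false] at h₁ h₂ <;> split_ifs <;>
    first | omega | (simp only [decide_eq_true_eq, decide_eq_false_iff_not]; omega)

/-- `ψ`, read on increasing triples, is a `(4, 4; 3)`-colouring of `range m`. -/
def NoMonochromaticQuad (ψ : ℕ → ℕ → ℕ → Bool) (m : ℕ) : Prop :=
  ∀ d < m, ∀ c < d, ∀ b < c, ∀ a < b, ∀ col : Bool,
    ψ a b c = col ∨ ψ a b d = col ∨ ψ a c d = col ∨ ψ b c d = col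

lemma sort_insert_four {α : Type*} [LinearOrder α] {a b c d : α} (hab : a < b) (hbc : b < c)
    (hcd : c < d) : ({a, b, c, d} : Finset α).sort = [a, b, c, d] := by
  have hl : [a, b, c, d].Pairwise (· < ·) := by
    simp [hab, hbc, hcd, hab.trans hbc, hbc.trans hcd, hab.trans (hbc.trans hcd)]
  simpa using (List.toFinset_sort (· ≤ ·) (hl.imp ne_of_lt)).2 (hl.imp le_of_lt)

variable {n m : ℕ} {ψ : ℕ → ℕ → ℕ → Bool}

variable (ψ) in
def upColoring (e : Finset (Fin n)) : Bool :=
  match e.sort with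
  | [a, b, c, d] => upColor ψ (delta a b) (delta b c) (delta c d)
  | _ => false

variable (ψ) in
def HasQuadOfColor (S : Finset (Fin n)) (col : Bool) : Prop :=
  ∃ e ⊆ S, e.card = 4 ∧ upColoring ψ e = col

lemma hasQuadOfColor_of_lt {S : Finset (Fin n)} {a b c d : Fin n}
    (ha : a ∈ S) (hb : b ∈ S) (hc : c ∈ S) (hd : d ∈ S) (hab : a < b) (hbc : b < c) (hcd : c < d) :
    HasQuadOfColor ψ S (upColor ψ (delta a b) (delta b c) (delta c d)) := by
  have hsort := sort_insert_four hab hbc hcd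
  refine ⟨{a, b, c, d}, by simp [Finset.insert_subset_iff, *], ?_, ?_⟩
  · rw [← Finset.length_sort (· ≤ ·), hsort]; rfl
  · rw [upColoring, hsort]

lemma hasQuadOfColor_of_chain {S : Finset (Fin n)} {a b c d : Fin n}
    (ha : a ∈ S) (hb : b ∈ S) (hc : c ∈ S) (hd : d ∈ S)
    (h : a < b ∧ b < c ∧ c < d ∨ d < c ∧ c < b ∧ b < a) :
    HasQuadOfColor ψ S (upColor ψ (delta a b) (delta b c) (delta c d)) := by
  rcases h with ⟨hab, hbc, hcd⟩ | ⟨hdc, hcb, hba⟩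
  · exact hasQuadOfColor_of_lt ha hb hc hd hab hbc hcd
  · simpa only [delta_comm, upColor_rev] using hasQuadOfColor_of_lt hd hc hb ha hdc hcb hba

lemma hasQuadOfColor_of_turn {S : Finset (Fin n)} {a b c d : Fin n}
    (ha : a ∈ S) (hb : b ∈ S) (hc : c ∈ S) (hd : d ∈ S) (hab : a < b) (hbc : b < c) (hcd : c < d)
    {col : Bool} (h₁ : decide (delta a b < delta b c) = col)
    (h₂ : decide (delta b c < delta c d) = !col) : HasQuadOfColor ψ S col :=
  upColor_of_turn ψ h₁ h₂ (delta_ne_delta hbc hcd) ▸ hasQuadOfColor_of_lt ha hb hc hd hab hbc hcd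

lemma hasQuadOfColor_of_delta_lt (hψ : NoMonochromaticQuad ψ m) (hn : n ≤ 2 ^ m)
    {S : Finset (Fin n)} {x₀ x₁ x₂ x₃ x₄ : Fin n}
    (hx₀ : x₀ ∈ S) (hx₁ : x₁ ∈ S) (hx₂ : x₂ ∈ S) (hx₃ : x₃ ∈ S) (hx₄ : x₄ ∈ S)
    (hx : x₀ < x₁ ∧ x₁ < x₂ ∧ x₂ < x₃ ∧ x₃ < x₄ ∨ x₄ < x₃ ∧ x₃ < x₂ ∧ x₂ < x₁ ∧ x₁ < x₀)
    (hd₁ : delta x₀ x₁ < delta x₁ x₂) (hd₂ : delta x₁ x₂ < delta x₂ x₃)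
    (hd₃ : delta x₂ x₃ < delta x₃ x₄) (col : Bool) : HasQuadOfColor ψ S col := by
  have h₁₃ : delta x₁ x₃ = delta x₂ x₃ := by rw [delta_eq_max_of_ne hd₂.ne, max_eq_right hd₂.le]
  have h₂₄ : delta x₂ x₄ = delta x₃ x₄ := by rw [delta_eq_max_of_ne hd₃.ne, max_eq_right hd₃.le]
  have hm : delta x₃ x₄ < m :=
    delta_lt_of_lt_two_pow (x₃.2.trans_le hn) (x₄.2.trans_le hn) (by omega)
  obtain h | h | h | h := hψ _ hm _ hd₃ _ hd₂ _ hd₁ col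
  · convert hasQuadOfColor_of_chain hx₀ hx₁ hx₂ hx₃ (by omega) using 1
    rw [upColor_of_lt_of_lt ψ hd₁ hd₂, h]
  · convert hasQuadOfColor_of_chain hx₀ hx₁ hx₂ hx₄ (by omega) using 1
    rw [h₂₄, upColor_of_lt_of_lt ψ hd₁ (hd₂.trans hd₃), h]
  · convert hasQuadOfColor_of_chain hx₀ hx₁ hx₃ hx₄ (by omega) using 1
    rw [h₁₃, upColor_of_lt_of_lt ψ (hd₁.trans hd₂) hd₃, h]
  · convert hasQuadOfColor_of_chain hx₁ hx₂ hx₃ hx₄ (by omega) using 1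
    rw [upColor_of_lt_of_lt ψ hd₂ hd₃, h]

lemma hasQuadOfColor_of_run (hψ : NoMonochromaticQuad ψ m) (hn : n ≤ 2 ^ m)
    {S : Finset (Fin n)} {x₀ x₁ x₂ x₃ x₄ : Fin n}
    (hx₀ : x₀ ∈ S) (hx₁ : x₁ ∈ S) (hx₂ : x₂ ∈ S) (hx₃ : x₃ ∈ S) (hx₄ : x₄ ∈ S)
    (h₀₁ : x₀ < x₁) (h₁₂ : x₁ < x₂) (h₂₃ : x₂ < x₃) (h₃₄ : x₃ < x₄)
    (hs : decide (delta x₀ x₁ < delta x₁ x₂) = decide (delta x₁ x₂ < delta x₂ x₃) ∧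
      decide (delta x₁ x₂ < delta x₂ x₃) = decide (delta x₂ x₃ < delta x₃ x₄))
    (col : Bool) : HasQuadOfColor ψ S col := by
  have := delta_ne_delta h₀₁ h₁₂
  have := delta_ne_delta h₁₂ h₂₃
  have := delta_ne_delta h₂₃ h₃₄
  rw [decide_eq_decide, decide_eq_decide] at hs
  by_cases hup : delta x₀ x₁ < delta x₁ x₂
  · exact hasQuadOfColor_of_delta_lt hψ hn hx₀ hx₁ hx₂ hx₃ hx₄ (by omega) hup (by omega)
      (by omega) col
  · have := hasQuadOfColor_of_delta_lt (ψ := ψ) hψ hn hx₄ hx₃ hx₂ hx₁ hx₀ (by omega)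
    rw [delta_comm x₄, delta_comm x₃ x₂, delta_comm x₂ x₁, delta_comm x₁ x₀] at this
    exact this (by omega) (by omega) (by omega) col

/-- With `sᵢ` recording whether the `i`-th of six deltas is below the next one, a factor
`col, !col` is a peak (`col = true`) or valley (`col = false`), and three equal letters are a
monotone run of four deltas. -/
lemma turn_or_run (col s₁ s₂ s₃ s₄ s₅ : Bool) :
    (s₁ = col ∧ s₂ = !col) ∨ (s₂ = col ∧ s₃ = !col) ∨ (s₃ = col ∧ s₄ = !col) ∨
      (s₄ = col ∧ s₅ = !col) ∨ (s₁ = s₂ ∧ s₂ = s₃) ∨ (s₂ = s₃ ∧ s₃ = s₄) ∨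
      (s₃ = s₄ ∧ s₄ = s₅) := by
  revert col s₁ s₂ s₃ s₄ s₅; decide

lemma hasQuadOfColor_of_card_eq_seven (hψ : NoMonochromaticQuad ψ m) (hn : n ≤ 2 ^ m)
    {S : Finset (Fin n)} (hS : S.card = 7) (col : Bool) : HasQuadOfColor ψ S col := by
  set x := S.orderEmbOfFin hS
  have hx (i : Fin 7) : x i ∈ S := S.orderEmbOfFin_mem hS i
  have hlt (i : Fin 6) : x i.castSucc < x i.succ := x.strictMono i.castSucc_lt_succ
  let s (i : Fin 7) : Bool := decide (delta (x i) (x (i + 1)) < delta (x (i + 1)) (x (i + 2)))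
  rcases turn_or_run col (s 0) (s 1) (s 2) (s 3) (s 4) with h | h | h | h | h | h | h
  · exact hasQuadOfColor_of_turn (hx 0) (hx 1) (hx 2) (hx 3) (hlt 0) (hlt 1) (hlt 2) h.1 h.2
  · exact hasQuadOfColor_of_turn (hx 1) (hx 2) (hx 3) (hx 4) (hlt 1) (hlt 2) (hlt 3) h.1 h.2
  · exact hasQuadOfColor_of_turn (hx 2) (hx 3) (hx 4) (hx 5) (hlt 2) (hlt 3) (hlt 4) h.1 h.2
  · exact hasQuadOfColor_of_turn (hx 3) (hx 4) (hx 5) (hx 6) (hlt 3) (hlt 4) (hlt 5) h.1 h.2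
  · exact hasQuadOfColor_of_run hψ hn (hx 0) (hx 1) (hx 2) (hx 3) (hx 4)
      (hlt 0) (hlt 1) (hlt 2) (hlt 3) h col
  · exact hasQuadOfColor_of_run hψ hn (hx 1) (hx 2) (hx 3) (hx 4) (hx 5)
      (hlt 1) (hlt 2) (hlt 3) (hlt 4) h col
  · exact hasQuadOfColor_of_run hψ hn (hx 2) (hx 3) (hx 4) (hx 5) (hx 6)
      (hlt 2) (hlt 3) (hlt 4) (hlt 5) h col

/-- Bit `2 ^ a + 2 ^ b + 2 ^ c` of `table` is the colour of `{a, b, c}` in a 2-colouring of the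
triples of `range 12` without a monochromatic 4-set. -/
def table : ℕ := 672706415849525363672061710590748598082054942455713095703964256924642914189508604773708764189696783156378438073888116272514874423732520634561813215153607053875797856686870851853903126694745991235256454802873769668129528683165453542814843478252959701980957822297832097572548364220765808259905889478346629506641527846193828410048071433165537165021332233454117570290442978376406610094766685469452178283697760467006031728469967917528807300880432965913416830357751109408221102630591453549936353310773033027871608247415449252656718507485167056988149665938472328331218576476251106124193342356105862802107840230884163164975143741284185292511155265376324189423119516091120670999614162957559489042301743575987794035519369311359101892933608548770950269778021066315328438883845219777247547175011595833025519684783609201036147228064558713482161640863490001621380909381785837548584295023877452057259953520047048905645770305918112562510021642824851340409610945571121589303631873475047658714497620854651762100290979968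

def psi (a b c : ℕ) : Bool := table.testBit (2 ^ a ||| 2 ^ b ||| 2 ^ c)

set_option synthInstance.maxSize 512 in
lemma noMonochromaticQuad_psi : NoMonochromaticQuad psi 12 := by
  unfold NoMonochromaticQuad; decide

end SteppingUp

open SteppingUp in
theorem stmt_18 :
    ∃ χ : Finset (Fin 3960) → Bool,
      ∀ S : Finset (Fin 3960), S.card = 7 →
        (∃ e ⊆ S, e.card = 4 ∧ χ e = false) ∧ (∃ e' ⊆ S, e'.card = 4 ∧ χ e' = true) := by
  have hn : 3960 ≤ 2 ^ 12 := by norm_num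
  exact ⟨upColoring psi, fun S hS =>
    ⟨hasQuadOfColor_of_card_eq_seven noMonochromaticQuad_psi hn hS false,
      hasQuadOfColor_of_card_eq_seven noMonochromaticQuad_psi hn hS true⟩⟩
end
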